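/- arXiv:1803.06334 — 9 statements merged into one kernel-verified Lean document; each statement's English description precedes it below -/
import Mathlib

section
/- There exists a bijection f : ℕ → ℤ that avoids 6-term arithmetic progressions; that is, there is a permutation of the integers containing no 6-term arithmetic progression as a subsequence. -/
namespace APF

/-- reverse the low `K` bits of `n` (bits beyond `K` are dropped) -/
def bitrev : ℕ → ℕ → ℕ
  | 0, _ => 0
  | K+1, n => n % 2 * 2 ^ K + bitrev K (n / 2)

lemma bitrev_succ (K n : ℕ) : bitrev (K+1) n = n % 2 * 2 ^ K + bitrev K (n / 2) := rfl

lemma bitrev_lt : ∀ K n, bitrev K n < 2 ^ K := by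
  intro K
  induction K with
  | zero => intro n; simp [bitrev]
  | succ K ih =>
    intro n
    have h1 := ih (n / 2)
    have h3 : (2:ℕ) ^ (K+1) = 2 * 2 ^ K := by rw [pow_succ]; ring
    rw [bitrev_succ]
    have h2 : n % 2 = 0 ∨ n % 2 = 1 := by omega
    rcases h2 with h2 | h2 <;> rw [h2] <;> omega

lemma bitrev_peel : ∀ K b r, b ≤ 1 → r < 2 ^ K →
    bitrev (K+1) (b * 2 ^ K + r) = 2 * bitrev K r + b := by
  intro K
  induction K with
  | zero =>
    intro b r hb hr
    interval_cases r
    interval_cases b <;> simp [bitrev]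
  | succ K ih =>
    intro b r hb hr
    have hp : (2:ℕ) ^ (K+1) = 2 * 2 ^ K := by rw [pow_succ]; ring
    have hb2 : b = 0 ∨ b = 1 := by omega
    have hmod : (b * 2 ^ (K+1) + r) % 2 = r % 2 := by
      rcases hb2 with h | h <;> rw [h] <;> omega
    have hdiv : (b * 2 ^ (K+1) + r) / 2 = b * 2 ^ K + r / 2 := by
      rcases hb2 with h | h <;> rw [h] <;> omega
    have hr2 : r / 2 < 2 ^ K := by omega
    rw [bitrev_succ, hmod, hdiv, ih b (r/2) hb hr2, bitrev_succ]
    have hrm : r % 2 = 0 ∨ r % 2 = 1 := by omega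
    rcases hrm with h | h <;> rw [h] <;> omega

lemma bitrev_invol : ∀ K n, n < 2 ^ K → bitrev K (bitrev K n) = n := by
  intro K
  induction K with
  | zero => intro n hn; interval_cases n; rfl
  | succ K ih =>
    intro n hn
    have h1 : bitrev K (n / 2) < 2 ^ K := bitrev_lt K (n / 2)
    have h2 : n % 2 ≤ 1 := by omega
    have hp : (2:ℕ) ^ (K+1) = 2 * 2 ^ K := by rw [pow_succ]; ring
    have h3 : n / 2 < 2 ^ K := by omega
    rw [bitrev_succ K n, bitrev_peel K (n % 2) _ h2 h1, ih _ h3]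
    omega

lemma bitrev_noAP : ∀ K x y z, x < 2 ^ K → z < 2 ^ K → x + z = 2 * y →
    bitrev K x < bitrev K y → bitrev K y < bitrev K z → False := by
  intro K
  induction K with
  | zero =>
    intro x y z hx hz _ h1 h2
    interval_cases x <;> interval_cases z <;> simp [bitrev] at h1 h2 <;> omega
  | succ K ih =>
    intro x y z hx hz hsum h1 h2
    have hy : y < 2 ^ (K+1) := by omega
    have hp2 : (2:ℕ) ^ (K+1) = 2 * 2 ^ K := by rw [pow_succ]; ring
    have bx := bitrev_lt K (x / 2)
    have by' := bitrev_lt K (y / 2)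
    have bz := bitrev_lt K (z / 2)
    rw [bitrev_succ, bitrev_succ] at h1 h2
    have hxz : x % 2 = z % 2 := by omega
    have hx2 : x % 2 = 0 ∨ x % 2 = 1 := by omega
    have hy2 : y % 2 = 0 ∨ y % 2 = 1 := by omega
    by_cases hxy : x % 2 = y % 2
    · have hyz : y % 2 = z % 2 := by omega
      rw [hxy] at h1
      rw [hyz] at h2
      have l1 : bitrev K (x / 2) < bitrev K (y / 2) := by
        rcases hy2 with h | h <;> rw [h] at h1 <;> omega
      have l2 : bitrev K (y / 2) < bitrev K (z / 2) := by
        rcases hy2 with h | h <;> rw [hyz] at h <;> rw [h] at h2 <;> omega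
      exact ih (x/2) (y/2) (z/2) (by omega) (by omega) (by omega) l1 l2
    · rcases hx2 with h | h
      · have hy1 : y % 2 = 1 := by omega
        have hz0 : z % 2 = 0 := by omega
        rw [h, hy1] at h1
        rw [hy1, hz0] at h2
        omega
      · have hy0 : y % 2 = 0 := by omega
        rw [h, hy0] at h1
        omega

end APF
namespace APF

/-- `C m = (64^m - 1)/63`: magnitude boundaries. Negative block `j` holds values `x`
with `C j ≤ -x-1 < C (j+1)`; positive block `j` holds `4*C j ≤ x < 4*C (j+1)`. -/
def C : ℕ → ℕ
  | 0 => 0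
  | m+1 => 64 * C m + 1

lemma C_succ (m : ℕ) : C (m+1) = 64 * C m + 1 := rfl

lemma C_pow (j : ℕ) : 63 * C j + 1 = 64 ^ j := by
  induction j with
  | zero => simp [C]
  | succ j ih => rw [C_succ, pow_succ]; omega

lemma C_width (j : ℕ) : C (j+1) = C j + 2 ^ (6*j) := by
  have h : (2:ℕ) ^ (6*j) = 64 ^ j := by
    rw [pow_mul]; norm_num
  have := C_pow j
  rw [C_succ]; omega

lemma C_width' (j : ℕ) : 4 * C (j+1) = 4 * C j + 2 ^ (6*j+2) := by
  have h : (2:ℕ) ^ (6*j+2) = 4 * 2 ^ (6*j) := by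
    rw [pow_add]; ring
  have := C_width j
  omega

lemma C_mono : Monotone C := by
  apply monotone_nat_of_le_succ
  intro m
  rw [C_succ]; omega

lemma le_C (m : ℕ) : m ≤ C m := by
  induction m with
  | zero => simp [C]
  | succ m ih => rw [C_succ]; omega

/-- size of the `t`-th block in the enumeration: blocks alternate
negative (even `t`, size `2^(6j)`) and nonnegative (odd `t`, size `2^(6j+2)`), `j = t/2`. -/
def sizeB (t : ℕ) : ℕ := if t % 2 = 0 then 2 ^ (6 * (t/2)) else 2 ^ (6 * (t/2) + 2)

lemma sizeB_even (j : ℕ) : sizeB (2*j) = 2 ^ (6*j) := by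
  have h1 : (2*j) % 2 = 0 := by omega
  have h2 : (2*j) / 2 = j := by omega
  simp [sizeB, h1, h2]

lemma sizeB_odd (j : ℕ) : sizeB (2*j+1) = 2 ^ (6*j+2) := by
  have h1 : (2*j+1) % 2 = 1 := by omega
  have h2 : (2*j+1) / 2 = j := by omega
  simp [sizeB, h1, h2]

def start : ℕ → ℕ
  | 0 => 0
  | t+1 => start t + sizeB t

lemma start_succ (t : ℕ) : start (t+1) = start t + sizeB t := rfl

lemma start_mono : Monotone start := by
  apply monotone_nat_of_le_succ
  intro t
  rw [start_succ]; omega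

lemma le_start (t : ℕ) : t ≤ start t := by
  induction t with
  | zero => simp [start]
  | succ t ih =>
    have : 1 ≤ sizeB t := by unfold sizeB; split <;> exact Nat.one_le_two_pow
    rw [start_succ]
    · omega

lemma exP (y : ℕ) : ∃ j, y < 4 * C (j+1) := ⟨y, by have := le_C (y+1); omega⟩
lemma exN (w : ℕ) : ∃ j, w < C (j+1) := ⟨w, by have := le_C (w+1); omega⟩
lemma exT (n : ℕ) : ∃ t, n < start (t+1) := ⟨n, by have := le_start (n+1); omega⟩

/-- positive block index of `y : ℕ` -/
def pidx (y : ℕ) : ℕ := Nat.find (exP y)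
/-- negative block index from shifted magnitude `w = -x-1` -/
def nidx (w : ℕ) : ℕ := Nat.find (exN w)
/-- block index of an enumeration position -/
def tidx (n : ℕ) : ℕ := Nat.find (exT n)

lemma pidx_lt (y : ℕ) : y < 4 * C (pidx y + 1) := Nat.find_spec (exP y)
lemma pidx_le (y : ℕ) : 4 * C (pidx y) ≤ y := by
  rcases h : pidx y with _ | j
  · simp [C]
  · have := Nat.find_min (exP y) (show j < pidx y by omega)
    rw [← h] at this ⊢
    omega

lemma pidx_eq (y j : ℕ) (h1 : 4 * C j ≤ y) (h2 : y < 4 * C (j+1)) : pidx y = j := by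
  have hle : pidx y ≤ j := Nat.find_le h2
  rcases Nat.lt_or_ge (pidx y) j with h | h
  · have := pidx_lt y
    have hmc : C (pidx y + 1) ≤ C j := C_mono (by omega)
    omega
  · omega

lemma nidx_lt (w : ℕ) : w < C (nidx w + 1) := Nat.find_spec (exN w)
lemma nidx_le (w : ℕ) : C (nidx w) ≤ w := by
  rcases h : nidx w with _ | j
  · simp [C]
  · have := Nat.find_min (exN w) (show j < nidx w by omega)
    rw [← h] at this ⊢
    omega

lemma nidx_eq (w j : ℕ) (h1 : C j ≤ w) (h2 : w < C (j+1)) : nidx w = j := by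
  have hle : nidx w ≤ j := Nat.find_le h2
  rcases Nat.lt_or_ge (nidx w) j with h | h
  · have := nidx_lt w
    have hmc : C (nidx w + 1) ≤ C j := C_mono (by omega)
    omega
  · omega

lemma tidx_lt (n : ℕ) : n < start (tidx n + 1) := Nat.find_spec (exT n)
lemma tidx_le (n : ℕ) : start (tidx n) ≤ n := by
  rcases h : tidx n with _ | t
  · simp [start]
  · have := Nat.find_min (exT n) (show t < tidx n by omega)
    rw [← h] at this ⊢
    omega

lemma tidx_eq (n t : ℕ) (h1 : start t ≤ n) (h2 : n < start (t+1)) : tidx n = t := by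
  have hle : tidx n ≤ t := Nat.find_le h2
  rcases Nat.lt_or_ge (tidx n) t with h | h
  · have := tidx_lt n
    have hmc : start (tidx n + 1) ≤ start t := start_mono (by omega)
    omega
  · omega

/-- ranking function : the position of `v : ℤ` in our enumeration -/
def zr (v : ℤ) : ℕ :=
  if v < 0 then
    start (2 * nidx (-v - 1).toNat) +
      bitrev (6 * nidx (-v - 1).toNat) ((-v - 1).toNat - C (nidx (-v - 1).toNat))
  else
    start (2 * pidx v.toNat + 1) +
      bitrev (6 * pidx v.toNat + 2) (v.toNat - 4 * C (pidx v.toNat))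

/-- the enumeration itself -/
def zg (n : ℕ) : ℤ :=
  if (tidx n) % 2 = 0 then
    -(C (tidx n / 2) : ℤ) - (bitrev (6 * (tidx n / 2)) (n - start (tidx n)) : ℤ) - 1
  else
    (4 * C (tidx n / 2) : ℤ) + (bitrev (6 * (tidx n / 2) + 2) (n - start (tidx n)) : ℤ)

lemma zg_zr (v : ℤ) : zg (zr v) = v := by
  by_cases hv : v < 0
  · rw [zr, if_pos hv]
    set w := (-v - 1).toNat with hw
    set j := nidx w with hj
    have hw1 : C j ≤ w := nidx_le w
    have hw2 : w < C (j+1) := nidx_lt w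
    have hwidth := C_width j
    set o := w - C j with ho
    have holt : o < 2 ^ (6*j) := by omega
    set b := bitrev (6*j) o with hb
    have hblt : b < 2 ^ (6*j) := bitrev_lt _ _
    set n := start (2*j) + b with hn
    have ht : tidx n = 2*j := by
      apply tidx_eq
      · omega
      · rw [start_succ, sizeB_even]; omega
    have hpar : (2*j) % 2 = 0 := by omega
    have hdiv : (2*j) / 2 = j := by omega
    rw [zg, ht, if_pos hpar, hdiv]
    have hsub : n - start (2*j) = b := by omega
    rw [hsub, hb, bitrev_invol _ o holt]
    have hcast : (w : ℤ) = -v - 1 := by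
      rw [hw]; omega
    omega
  · rw [zr, if_neg hv]
    push_neg at hv
    set y := v.toNat with hy
    set j := pidx y with hj
    have hw1 : 4 * C j ≤ y := pidx_le y
    have hw2 : y < 4 * C (j+1) := pidx_lt y
    have hwidth := C_width' j
    set o := y - 4 * C j with ho
    have holt : o < 2 ^ (6*j+2) := by omega
    set b := bitrev (6*j+2) o with hb
    have hblt : b < 2 ^ (6*j+2) := bitrev_lt _ _
    set n := start (2*j+1) + b with hn
    have ht : tidx n = 2*j+1 := by
      apply tidx_eq
      · omega
      · rw [start_succ, sizeB_odd]; omega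
    have hpar : ¬ ((2*j+1) % 2 = 0) := by omega
    have hdiv : (2*j+1) / 2 = j := by omega
    rw [zg, ht, if_neg hpar, hdiv]
    have hsub : n - start (2*j+1) = b := by omega
    rw [hsub, hb, bitrev_invol _ o holt]
    have hcast : (y : ℤ) = v := by rw [hy]; omega
    omega

lemma zr_zg (n : ℕ) : zr (zg n) = n := by
  set t := tidx n with ht
  have h1 : start t ≤ n := tidx_le n
  have h2 : n < start t + sizeB t := by
    have := tidx_lt n
    rwa [start_succ] at this
  set o := n - start t with ho
  by_cases hpar : t % 2 = 0
  · set j := t / 2 with hj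
    have htj : t = 2*j := by omega
    have hsize : sizeB t = 2 ^ (6*j) := by rw [htj, sizeB_even]
    have holt : o < 2 ^ (6*j) := by omega
    set b := bitrev (6*j) o with hb
    have hblt : b < 2 ^ (6*j) := bitrev_lt _ _
    have hzg : zg n = -(C j : ℤ) - (b : ℤ) - 1 := by
      rw [zg, ← ht, if_pos hpar, ← hj, ← ho, ← hb]
    have hneg : zg n < 0 := by
      rw [hzg]; push_cast; omega
    rw [zr, if_pos hneg]
    have hwt : (-(zg n) - 1).toNat = C j + b := by
      rw [hzg]; omega
    rw [show -zg n - 1 = -(zg n) - 1 from rfl] at *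
    rw [hwt]
    have hwidth := C_width j
    have hnidx : nidx (C j + b) = j := nidx_eq _ _ (by omega) (by omega)
    rw [hnidx]
    have hsub : C j + b - C j = b := by omega
    rw [hsub, hb, bitrev_invol _ o holt]
    have hst : start (2*j) = start t := by rw [htj]
    omega
  · set j := t / 2 with hj
    have htj : t = 2*j+1 := by omega
    have hsize : sizeB t = 2 ^ (6*j+2) := by rw [htj, sizeB_odd]
    have holt : o < 2 ^ (6*j+2) := by omega
    set b := bitrev (6*j+2) o with hb
    have hblt : b < 2 ^ (6*j+2) := bitrev_lt _ _
    have hzg : zg n = (4 * C j : ℤ) + (b : ℤ) := by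
      rw [zg, ← ht, if_neg hpar, ← hj, ← ho, ← hb]
    have hpos : ¬ (zg n < 0) := by
      rw [hzg]; push_cast; omega
    rw [zr, if_neg hpos]
    have hwt : (zg n).toNat = 4 * C j + b := by
      rw [hzg]; omega
    rw [hwt]
    have hwidth := C_width' j
    have hpidx : pidx (4 * C j + b) = j := pidx_eq _ _ (by omega) (by omega)
    rw [hpidx]
    have hsub : 4 * C j + b - 4 * C j = b := by omega
    rw [hsub, hb, bitrev_invol _ o holt]
    have hst : start (2*j+1) = start t := by rw [htj]
    omega

end APF
namespace APF

/-- block number of a value in the enumeration order. -/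
def blk (v : ℤ) : ℕ :=
  if v < 0 then 2 * nidx (-v - 1).toNat else 2 * pidx v.toNat + 1

lemma blk_neg (v : ℤ) (h : v < 0) : blk v = 2 * nidx (-v - 1).toNat := by
  rw [blk, if_pos h]

lemma blk_pos (v : ℤ) (h : 0 ≤ v) : blk v = 2 * pidx v.toNat + 1 := by
  rw [blk, if_neg (by omega)]

lemma zr_ge (v : ℤ) : start (blk v) ≤ zr v := by
  by_cases h : v < 0
  · rw [blk_neg v h, zr, if_pos h]; omega
  · rw [blk_pos v (by omega), zr, if_neg h]; omega

lemma zr_lt (v : ℤ) : zr v < start (blk v + 1) := by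
  by_cases h : v < 0
  · rw [blk_neg v h, zr, if_pos h, start_succ (2 * nidx (-v - 1).toNat), sizeB_even]
    have := bitrev_lt (6 * nidx (-v - 1).toNat) ((-v - 1).toNat - C (nidx (-v - 1).toNat))
    omega
  · rw [blk_pos v (by omega), zr, if_neg h, start_succ (2 * pidx v.toNat + 1), sizeB_odd]
    have := bitrev_lt (6 * pidx v.toNat + 2) (v.toNat - 4 * C (pidx v.toNat))
    omega

lemma blk_le {x y : ℤ} (h : zr x < zr y) : blk x ≤ blk y := by
  by_contra hc
  have h1 : blk y + 1 ≤ blk x := by omega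
  have h2 := start_mono h1
  have h3 := zr_lt y
  have h4 := zr_ge x
  omega

/- value bounds in terms of block index -/
lemma pos_lb (v : ℤ) (h : 0 ≤ v) : (4 * C (pidx v.toNat) : ℤ) ≤ v := by
  have := pidx_le v.toNat
  omega

lemma pos_ub (v : ℤ) (h : 0 ≤ v) : v < (4 * C (pidx v.toNat + 1) : ℤ) := by
  have := pidx_lt v.toNat
  omega

lemma neg_lb (v : ℤ) (h : v < 0) : (C (nidx (-v - 1).toNat) : ℤ) ≤ -v - 1 := by
  have := nidx_le (-v - 1).toNat
  omega

lemma neg_ub (v : ℤ) (h : v < 0) : -v - 1 < (C (nidx (-v - 1).toNat + 1) : ℤ) := by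
  have := nidx_lt (-v - 1).toNat
  omega

/-- three values of an AP in the same block, in increasing rank order: impossible. -/
lemma noAP_blk (x y z : ℤ) (hs : x + z = 2 * y)
    (e1 : blk x = blk y) (e2 : blk y = blk z)
    (l1 : zr x < zr y) (l2 : zr y < zr z) : False := by
  by_cases hx : x < 0
  · -- x negative: then y, z negative too (parity of blk)
    by_cases hy : y < 0
    · by_cases hz : z < 0
      · -- all negative, same nidx
        set wx := (-x - 1).toNat with hwx
        set wy := (-y - 1).toNat with hwy
        set wz := (-z - 1).toNat with hwz
        rw [blk_neg x hx, blk_neg y hy] at e1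
        rw [blk_neg y hy, blk_neg z hz] at e2
        rw [← hwx, ← hwy] at e1
        rw [← hwy, ← hwz] at e2
        have ejy : nidx wy = nidx wx := by omega
        have ejz : nidx wz = nidx wx := by omega
        set j := nidx wx with hj
        have hx1 : C j ≤ wx := nidx_le wx
        have hx2 : wx < C (j+1) := nidx_lt wx
        have hy1 : C j ≤ wy := by have := nidx_le wy; rwa [ejy] at this
        have hy2 : wy < C (j+1) := by have := nidx_lt wy; rwa [ejy] at this
        have hz1 : C j ≤ wz := by have := nidx_le wz; rwa [ejz] at this
        have hz2 : wz < C (j+1) := by have := nidx_lt wz; rwa [ejz] at this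
        have hwidth := C_width j
        have hsum : wx + wz = 2 * wy := by omega
        have hrx : zr x = start (2*j) + bitrev (6*j) (wx - C j) := by
          rw [zr, if_pos hx]
        have hry : zr y = start (2*j) + bitrev (6*j) (wy - C j) := by
          rw [zr, if_pos hy, ← hwy, ejy]
        have hrz : zr z = start (2*j) + bitrev (6*j) (wz - C j) := by
          rw [zr, if_pos hz, ← hwz, ejz]
        rw [hrx, hry] at l1
        rw [hry, hrz] at l2
        exact bitrev_noAP (6*j) (wx - C j) (wy - C j) (wz - C j)
          (by omega) (by omega) (by omega) (by omega) (by omega)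
      · -- z ≥ 0 : blk z odd, blk y even, contradiction
        rw [blk_neg y hy, blk_pos z (by omega)] at e2
        omega
    · rw [blk_neg x hx, blk_pos y (by omega)] at e1
      omega
  · by_cases hy : y < 0
    · rw [blk_pos x (by omega), blk_neg y hy] at e1
      omega
    · by_cases hz : z < 0
      · rw [blk_pos y (by omega), blk_neg z hz] at e2
        omega
      · -- all nonnegative, same pidx
        push_neg at hx hy hz
        set yx := x.toNat with hyx
        set yy := y.toNat with hyy
        set yz := z.toNat with hyz
        rw [blk_pos x hx, blk_pos y hy] at e1
        rw [blk_pos y hy, blk_pos z hz] at e2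
        rw [← hyx, ← hyy] at e1
        rw [← hyy, ← hyz] at e2
        have ejy : pidx yy = pidx yx := by omega
        have ejz : pidx yz = pidx yx := by omega
        set j := pidx yx with hj
        have hx1 : 4 * C j ≤ yx := pidx_le yx
        have hx2 : yx < 4 * C (j+1) := pidx_lt yx
        have hy1 : 4 * C j ≤ yy := by have := pidx_le yy; rwa [ejy] at this
        have hy2 : yy < 4 * C (j+1) := by have := pidx_lt yy; rwa [ejy] at this
        have hz1 : 4 * C j ≤ yz := by have := pidx_le yz; rwa [ejz] at this
        have hz2 : yz < 4 * C (j+1) := by have := pidx_lt yz; rwa [ejz] at this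
        have hwidth := C_width' j
        have hsum : yx + yz = 2 * yy := by omega
        have hrx : zr x = start (2*j+1) + bitrev (6*j+2) (yx - 4 * C j) := by
          rw [zr, if_neg (by omega)]
        have hry : zr y = start (2*j+1) + bitrev (6*j+2) (yy - 4 * C j) := by
          rw [zr, if_neg (by omega), ← hyy, ejy]
        have hrz : zr z = start (2*j+1) + bitrev (6*j+2) (yz - 4 * C j) := by
          rw [zr, if_neg (by omega), ← hyz, ejz]
        rw [hrx, hry] at l1
        rw [hry, hrz] at l2
        exact bitrev_noAP (6*j+2) (yx - 4*C j) (yy - 4*C j) (yz - 4*C j)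
          (by omega) (by omega) (by omega) (by omega) (by omega)

/-- two negative values, increasing in value and in rank, lie in the same block. -/
lemma same_neg_blk {x y : ℤ} (hx : x < 0) (hy : y < 0) (hxy : x < y)
    (hr : zr x < zr y) : nidx (-x - 1).toNat = nidx (-y - 1).toNat := by
  have hb := blk_le hr
  rw [blk_neg x hx, blk_neg y hy] at hb
  set jx := nidx (-x - 1).toNat with hjx
  set jy := nidx (-y - 1).toNat with hjy
  have h1 : jx ≤ jy := by omega
  rcases Nat.lt_or_ge jx jy with h | h
  · exfalso
    have hylb := neg_lb y hy
    have hxub := neg_ub x hx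
    rw [← hjy] at hylb
    rw [← hjx] at hxub
    have hmc : (C (jx + 1) : ℤ) ≤ (C jy : ℤ) := by
      exact_mod_cast C_mono (by omega)
    omega
  · omega

/-- two nonnegative values, decreasing in value but increasing in rank, same block. -/
lemma same_pos_blk {x y : ℤ} (hx : 0 ≤ x) (hy : 0 ≤ y) (hxy : y < x)
    (hr : zr x < zr y) : pidx x.toNat = pidx y.toNat := by
  have hb := blk_le hr
  rw [blk_pos x hx, blk_pos y hy] at hb
  set jx := pidx x.toNat with hjx
  set jy := pidx y.toNat with hjy
  have h1 : jx ≤ jy := by omega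
  rcases Nat.lt_or_ge jx jy with h | h
  · exfalso
    have hylb := pos_lb y hy
    have hxub := pos_ub x hx
    rw [← hjy] at hylb
    rw [← hjx] at hxub
    have hmc : (4 * C (jx + 1) : ℤ) ≤ (4 * C jy : ℤ) := by
      have : C (jx+1) ≤ C jy := C_mono (by omega)
      omega
    omega
  · omega

end APF
namespace APF

lemma keyPos (v d : ℤ) (hd : 0 < d)
    (h1 : zr v < zr (v + d)) (h2 : zr (v + d) < zr (v + 2*d))
    (h3 : zr (v + 2*d) < zr (v + 3*d)) (h4 : zr (v + 3*d) < zr (v + 4*d))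
    (h5 : zr (v + 4*d) < zr (v + 5*d)) : False := by
  by_cases hA : v + 2*d < 0
  · -- at least three negative terms: v, v+d, v+2d in one negative block
    have hv1 : v + d < 0 := by omega
    have hv0 : v < 0 := by omega
    have e1 := same_neg_blk hv0 hv1 (by omega) h1
    have e2 := same_neg_blk hv1 hA (by omega) h2
    exact noAP_blk v (v+d) (v+2*d) (by ring)
      (by rw [blk_neg _ hv0, blk_neg _ hv1, e1])
      (by rw [blk_neg _ hv1, blk_neg _ hA, e2]) h1 h2
  · by_cases hB : v + d < 0
    · -- exactly two negative terms
      have hv0 : v < 0 := by omega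
      have hA' : 0 ≤ v + 2*d := by omega
      have hA3 : 0 ≤ v + 3*d := by omega
      have hA4 : 0 ≤ v + 4*d := by omega
      have e1 := same_neg_blk hv0 hB (by omega) h1
      have b0u := neg_ub v hv0
      rw [e1] at b0u
      have b1l := neg_lb (v+d) hB
      have hCs := C_succ (nidx (-(v+d) - 1).toNat)
      have hd63 : d ≤ 63 * (C (nidx (-(v+d) - 1).toNat) : ℤ) := by omega
      have hbl2 := blk_le h2
      rw [blk_neg _ hB, blk_pos _ hA'] at hbl2
      have hbl3 := blk_le h3
      rw [blk_pos _ hA', blk_pos _ hA3] at hbl3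
      have hbl4 := blk_le h4
      rw [blk_pos _ hA3, blk_pos _ hA4] at hbl4
      by_cases hE : pidx (v+2*d).toNat = pidx (v+3*d).toNat ∧
          pidx (v+3*d).toNat = pidx (v+4*d).toNat
      · exact noAP_blk (v+2*d) (v+3*d) (v+4*d) (by ring)
          (by rw [blk_pos _ hA', blk_pos _ hA3, hE.1])
          (by rw [blk_pos _ hA3, blk_pos _ hA4, hE.2]) h3 h4
      · have hp42 : nidx (-(v+d) - 1).toNat + 1 ≤ pidx (v+4*d).toNat := by omega
        have hlb := pos_lb (v+4*d) hA4
        have hmc : (C (nidx (-(v+d) - 1).toNat + 1) : ℤ) ≤ (C (pidx (v+4*d).toNat) : ℤ) := by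
          exact_mod_cast C_mono (by omega)
        have hub : v + 4*d ≤ 3*d - 1 := by omega
        omega
    · -- at most one negative term : v+d, ..., v+5d all nonnegative
      have hA1 : 0 ≤ v + d := by omega
      have hA2 : 0 ≤ v + 2*d := by omega
      have hA3 : 0 ≤ v + 3*d := by omega
      have hA4 : 0 ≤ v + 4*d := by omega
      have hA5 : 0 ≤ v + 5*d := by omega
      have hbl2 := blk_le h2
      rw [blk_pos _ hA1, blk_pos _ hA2] at hbl2
      have hbl3 := blk_le h3
      rw [blk_pos _ hA2, blk_pos _ hA3] at hbl3
      have hbl4 := blk_le h4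
      rw [blk_pos _ hA3, blk_pos _ hA4] at hbl4
      have hbl5 := blk_le h5
      rw [blk_pos _ hA4, blk_pos _ hA5] at hbl5
      by_cases hE1 : pidx (v+d).toNat = pidx (v+2*d).toNat ∧
          pidx (v+2*d).toNat = pidx (v+3*d).toNat
      · exact noAP_blk (v+d) (v+2*d) (v+3*d) (by ring)
          (by rw [blk_pos _ hA1, blk_pos _ hA2, hE1.1])
          (by rw [blk_pos _ hA2, blk_pos _ hA3, hE1.2]) h2 h3
      by_cases hE2 : pidx (v+2*d).toNat = pidx (v+3*d).toNat ∧
          pidx (v+3*d).toNat = pidx (v+4*d).toNat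
      · exact noAP_blk (v+2*d) (v+3*d) (v+4*d) (by ring)
          (by rw [blk_pos _ hA2, blk_pos _ hA3, hE2.1])
          (by rw [blk_pos _ hA3, blk_pos _ hA4, hE2.2]) h3 h4
      by_cases hE3 : pidx (v+3*d).toNat = pidx (v+4*d).toNat ∧
          pidx (v+4*d).toNat = pidx (v+5*d).toNat
      · exact noAP_blk (v+3*d) (v+4*d) (v+5*d) (by ring)
          (by rw [blk_pos _ hA3, blk_pos _ hA4, hE3.1])
          (by rw [blk_pos _ hA4, blk_pos _ hA5, hE3.2]) h4 h5
      have hp : pidx (v+d).toNat + 2 ≤ pidx (v+5*d).toNat := by omega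
      have hub1 := pos_ub (v+d) hA1
      have hlb5 := pos_lb (v+5*d) hA5
      have hmc : (C (pidx (v+d).toNat + 2) : ℤ) ≤ (C (pidx (v+5*d).toNat) : ℤ) := by
        exact_mod_cast C_mono (by omega)
      have hCs1 : C (pidx (v+d).toNat + 2) = 64 * C (pidx (v+d).toNat + 1) + 1 :=
        C_succ _
      by_cases hv0 : v < 0
      · have hbl1 := blk_le h1
        rw [blk_neg _ hv0, blk_pos _ hA1] at hbl1
        have hxu := neg_ub v hv0
        have hmc2 : (C (nidx (-v - 1).toNat + 1) : ℤ) ≤ (C (pidx (v+d).toNat + 1) : ℤ) := by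
          exact_mod_cast C_mono (by omega)
        omega
      · omega

lemma keyNeg (v d : ℤ) (hd : d < 0)
    (h1 : zr v < zr (v + d)) (h2 : zr (v + d) < zr (v + 2*d))
    (h3 : zr (v + 2*d) < zr (v + 3*d)) (h4 : zr (v + 3*d) < zr (v + 4*d))
    (h5 : zr (v + 4*d) < zr (v + 5*d)) : False := by
  by_cases hA : 0 ≤ v + 2*d
  · -- at least three nonnegative terms: v, v+d, v+2d in one positive block
    have hv1 : 0 ≤ v + d := by omega
    have hv0 : 0 ≤ v := by omega
    have e1 := same_pos_blk hv0 hv1 (by omega) h1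
    have e2 := same_pos_blk hv1 hA (by omega) h2
    exact noAP_blk v (v+d) (v+2*d) (by ring)
      (by rw [blk_pos _ hv0, blk_pos _ hv1, e1])
      (by rw [blk_pos _ hv1, blk_pos _ hA, e2]) h1 h2
  · by_cases hB : 0 ≤ v + d
    · -- exactly two nonnegative terms
      have hv0 : 0 ≤ v := by omega
      have hA2 : v + 2*d < 0 := by omega
      have hA3 : v + 3*d < 0 := by omega
      have hA4 : v + 4*d < 0 := by omega
      have e1 := same_pos_blk hv0 hB (by omega) h1
      have b0u := pos_ub v hv0
      rw [e1] at b0u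
      have b1l := pos_lb (v+d) hB
      have hbl2 := blk_le h2
      rw [blk_pos _ hB, blk_neg _ hA2] at hbl2
      have hbl3 := blk_le h3
      rw [blk_neg _ hA2, blk_neg _ hA3] at hbl3
      have hbl4 := blk_le h4
      rw [blk_neg _ hA3, blk_neg _ hA4] at hbl4
      by_cases hE : nidx (-(v+2*d) - 1).toNat = nidx (-(v+3*d) - 1).toNat ∧
          nidx (-(v+3*d) - 1).toNat = nidx (-(v+4*d) - 1).toNat
      · exact noAP_blk (v+2*d) (v+3*d) (v+4*d) (by ring)
          (by rw [blk_neg _ hA2, blk_neg _ hA3, hE.1])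
          (by rw [blk_neg _ hA3, blk_neg _ hA4, hE.2]) h3 h4
      · have hp42 : pidx (v+d).toNat + 2 ≤ nidx (-(v+4*d) - 1).toNat := by omega
        have hlb4 := neg_lb (v+4*d) hA4
        have hmc : (C (pidx (v+d).toNat + 2) : ℤ) ≤ (C (nidx (-(v+4*d) - 1).toNat) : ℤ) := by
          exact_mod_cast C_mono (by omega)
        have hCs1 := C_succ (pidx (v+d).toNat)
        have hCs2 : C (pidx (v+d).toNat + 2) = 64 * C (pidx (v+d).toNat + 1) + 1 :=
          C_succ _
        omega
    · -- at most one nonnegative term : v+d, ..., v+5d all negative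
      have hA1 : v + d < 0 := by omega
      have hA2 : v + 2*d < 0 := by omega
      have hA3 : v + 3*d < 0 := by omega
      have hA4 : v + 4*d < 0 := by omega
      have hA5 : v + 5*d < 0 := by omega
      have hbl2 := blk_le h2
      rw [blk_neg _ hA1, blk_neg _ hA2] at hbl2
      have hbl3 := blk_le h3
      rw [blk_neg _ hA2, blk_neg _ hA3] at hbl3
      have hbl4 := blk_le h4
      rw [blk_neg _ hA3, blk_neg _ hA4] at hbl4
      have hbl5 := blk_le h5
      rw [blk_neg _ hA4, blk_neg _ hA5] at hbl5
      by_cases hE1 : nidx (-(v+d) - 1).toNat = nidx (-(v+2*d) - 1).toNat ∧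
          nidx (-(v+2*d) - 1).toNat = nidx (-(v+3*d) - 1).toNat
      · exact noAP_blk (v+d) (v+2*d) (v+3*d) (by ring)
          (by rw [blk_neg _ hA1, blk_neg _ hA2, hE1.1])
          (by rw [blk_neg _ hA2, blk_neg _ hA3, hE1.2]) h2 h3
      by_cases hE2 : nidx (-(v+2*d) - 1).toNat = nidx (-(v+3*d) - 1).toNat ∧
          nidx (-(v+3*d) - 1).toNat = nidx (-(v+4*d) - 1).toNat
      · exact noAP_blk (v+2*d) (v+3*d) (v+4*d) (by ring)
          (by rw [blk_neg _ hA2, blk_neg _ hA3, hE2.1])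
          (by rw [blk_neg _ hA3, blk_neg _ hA4, hE2.2]) h3 h4
      by_cases hE3 : nidx (-(v+3*d) - 1).toNat = nidx (-(v+4*d) - 1).toNat ∧
          nidx (-(v+4*d) - 1).toNat = nidx (-(v+5*d) - 1).toNat
      · exact noAP_blk (v+3*d) (v+4*d) (v+5*d) (by ring)
          (by rw [blk_neg _ hA3, blk_neg _ hA4, hE3.1])
          (by rw [blk_neg _ hA4, blk_neg _ hA5, hE3.2]) h4 h5
      have hp : nidx (-(v+d) - 1).toNat + 2 ≤ nidx (-(v+5*d) - 1).toNat := by omega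
      have hub1 := neg_ub (v+d) hA1
      have hlb5 := neg_lb (v+5*d) hA5
      have hmc : (C (nidx (-(v+d) - 1).toNat + 2) : ℤ) ≤ (C (nidx (-(v+5*d) - 1).toNat) : ℤ) := by
        exact_mod_cast C_mono (by omega)
      have hCs0 := C_succ (nidx (-(v+d) - 1).toNat)
      have hCs1 : C (nidx (-(v+d) - 1).toNat + 2) = 64 * C (nidx (-(v+d) - 1).toNat + 1) + 1 :=
        C_succ _
      by_cases hv0 : 0 ≤ v
      · have hbl1 := blk_le h1
        rw [blk_pos _ hv0, blk_neg _ hA1] at hbl1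
        have hxu := pos_ub v hv0
        have hmc2 : (C (pidx v.toNat + 1) : ℤ) ≤ (C (nidx (-(v+d) - 1).toNat) : ℤ) := by
          exact_mod_cast C_mono (by omega)
        have hmc3 : (C (nidx (-(v+d) - 1).toNat) : ℤ) ≤ (C (nidx (-(v+d) - 1).toNat + 1) : ℤ) := by
          exact_mod_cast C_mono (by omega)
        omega
      · omega

lemma key (v d : ℤ) (hd : d ≠ 0)
    (h1 : zr v < zr (v + d)) (h2 : zr (v + d) < zr (v + 2*d))
    (h3 : zr (v + 2*d) < zr (v + 3*d)) (h4 : zr (v + 3*d) < zr (v + 4*d))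
    (h5 : zr (v + 4*d) < zr (v + 5*d)) : False := by
  rcases lt_or_gt_of_ne hd with h | h
  · exact keyNeg v d h h1 h2 h3 h4 h5
  · exact keyPos v d h h1 h2 h3 h4 h5

end APF
/-- A sequence `f : ℕ → ℤ` contains a `k`-term arithmetic progression: there are
indices `i 0 < i 1 < ⋯ < i (k-1)` and a nonzero integer `d` with consecutive
differences all equal to `d`. -/
def ContainsAPZ (f : ℕ → ℤ) (k : ℕ) : Prop :=
  ∃ (i : ℕ → ℕ) (d : ℤ), d ≠ 0 ∧ (∀ a b, a < b → b < k → i a < i b) ∧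
    ∀ j, j + 1 < k → f (i (j + 1)) = f (i j) + d

/-- There exists a permutation of the integers avoiding 6-term arithmetic progressions. -/
theorem exists_perm_int_avoiding_6AP :
    ∃ f : ℕ → ℤ, Function.Bijective f ∧ ¬ ContainsAPZ f 6 := by
  refine ⟨APF.zg, ?_, ?_⟩
  · exact Function.bijective_iff_has_inverse.mpr ⟨APF.zr, APF.zr_zg, APF.zg_zr⟩
  · rintro ⟨i, d, hd, hinc, hstep⟩
    have e1 := hstep 0 (by norm_num)
    have e2 := hstep 1 (by norm_num)
    have e3 := hstep 2 (by norm_num)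
    have e4 := hstep 3 (by norm_num)
    have e5 := hstep 4 (by norm_num)
    norm_num at e1 e2 e3 e4 e5
    set v := APF.zg (i 0) with hv
    have G1 : APF.zg (i 1) = v + d := by omega
    have G2 : APF.zg (i 2) = v + 2*d := by omega
    have G3 : APF.zg (i 3) = v + 3*d := by omega
    have G4 : APF.zg (i 4) = v + 4*d := by omega
    have G5 : APF.zg (i 5) = v + 5*d := by omega
    have r0 : APF.zr v = i 0 := APF.zr_zg (i 0)
    have r1 : APF.zr (v + d) = i 1 := by rw [← G1]; exact APF.zr_zg (i 1)
    have r2 : APF.zr (v + 2*d) = i 2 := by rw [← G2]; exact APF.zr_zg (i 2)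
    have r3 : APF.zr (v + 3*d) = i 3 := by rw [← G3]; exact APF.zr_zg (i 3)
    have r4 : APF.zr (v + 4*d) = i 4 := by rw [← G4]; exact APF.zr_zg (i 4)
    have r5 : APF.zr (v + 5*d) = i 5 := by rw [← G5]; exact APF.zr_zg (i 5)
    exact APF.key v d hd
      (by rw [r0, r1]; exact hinc 0 1 (by norm_num) (by norm_num))
      (by rw [r1, r2]; exact hinc 1 2 (by norm_num) (by norm_num))
      (by rw [r2, r3]; exact hinc 2 3 (by norm_num) (by norm_num))
      (by rw [r3, r4]; exact hinc 3 4 (by norm_num) (by norm_num))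
      (by rw [r4, r5]; exact hinc 4 5 (by norm_num) (by norm_num))
end

section
/- For every integer k ≥ 6, there exists a bijection f : ℕ → ℤ that avoids k-term arithmetic progressions. -/
open Function

theorem exists_bijective_strictMono_comp {α β : Type*} [Nonempty α] [LinearOrder β] (κ : α → β)
    (hκ : Injective κ) (hfin : ∀ a, {b | κ b < κ a}.Finite) (hmax : ∀ a, ∃ b, κ a < κ b) :
    ∃ f : ℕ → α, Bijective f ∧ StrictMono (κ ∘ f) := by
  let : LinearOrder α := LinearOrder.lift' κ hκ
  have hIic (a : α) : (Set.Iic a).Finite := by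
    rw [← Set.Iio_insert]
    exact (hfin a).insert a
  obtain ⟨a₀, ha₀⟩ := (hIic (Classical.arbitrary α)).exists_minimal ⟨_, le_rfl⟩
  let : OrderBot α :=
    { bot := a₀
      bot_le := fun a => (le_total a₀ a).elim id fun h => ha₀.2 (h.trans ha₀.1) h }
  have : NoMaxOrder α := ⟨hmax⟩
  let : LocallyFiniteOrder α :=
    LocallyFiniteOrder.ofFiniteIcc fun _ b => (hIic b).subset Set.Icc_subset_Iic_self
  let := LinearLocallyFiniteOrder.succOrder α
  let := LinearLocallyFiniteOrder.predOrder α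
  exact ⟨_, (orderIsoNatOfLinearSuccPredArch (ι := α)).symm.bijective,
    (orderIsoNatOfLinearSuccPredArch (ι := α)).symm.strictMono⟩

def bitKey (n : ℕ) : Lex (ℕ → Bool) := toLex fun i => n.testBit i

lemma bitKey_injective : Injective bitKey := fun _ _ h =>
  Nat.eq_of_testBit_eq fun i => congrFun h i

lemma testBit_add_two_pow_mul {m : ℕ} (hm : Odd m) (x t : ℕ) :
    (x + 2 ^ t * m).testBit t = !x.testBit t := by
  rw [add_comm, Nat.testBit_mul_two_pow_add_eq, Nat.odd_iff.mp hm]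
  simp

lemma bitKey_lt_bitKey_iff {x y t : ℕ} (hmod : x % 2 ^ t = y % 2 ^ t)
    (hne : x.testBit t ≠ y.testBit t) : bitKey x < bitKey y ↔ x.testBit t = false := by
  have hlow : ∀ j < t, x.testBit j = y.testBit j := fun j hj => by
    simpa [Nat.testBit_mod_two_pow, hj] using congrArg (Nat.testBit · j) hmod
  constructor
  · intro h
    have : x.testBit t ≤ y.testBit t := Pi.apply_le_of_toLex h.le hlow
    revert this hne
    cases x.testBit t <;> cases y.testBit t <;> simp
  · intro hx
    refine ⟨t, hlow, show x.testBit t < y.testBit t from ?_⟩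
    revert hx hne
    cases x.testBit t <;> cases y.testBit t <;> simp

lemma bitKey_lt_add_iff {m : ℕ} (hm : Odd m) (x t : ℕ) :
    bitKey x < bitKey (x + 2 ^ t * m) ↔ x.testBit t = false :=
  bitKey_lt_bitKey_iff (Nat.add_mul_mod_self_left x _ m).symm
    (by rw [testBit_add_two_pow_mul hm]; cases x.testBit t <;> simp)

lemma bitKey_add_lt_iff {m : ℕ} (hm : Odd m) (x t : ℕ) :
    bitKey (x + 2 ^ t * m) < bitKey x ↔ x.testBit t = true := by
  rw [bitKey_lt_bitKey_iff (Nat.add_mul_mod_self_left x _ m)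
    (by rw [testBit_add_two_pow_mul hm]; cases x.testBit t <;> simp), testBit_add_two_pow_mul hm]
  simp

lemma not_bitKey_lt_of_lt_add {x δ : ℕ} (h : bitKey x < bitKey (x + δ)) :
    ¬ bitKey (x + δ) < bitKey (x + δ + δ) := by
  obtain ⟨t, m, hm, rfl⟩ :=
    Nat.exists_eq_two_pow_mul_odd (n := δ) (by rintro rfl; exact lt_irrefl _ h)
  rw [bitKey_lt_add_iff hm] at h ⊢
  simp [testBit_add_two_pow_mul hm, h]

lemma not_bitKey_lt_of_add_lt {x δ : ℕ} (h : bitKey (x + δ) < bitKey x) :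
    ¬ bitKey (x + δ + δ) < bitKey (x + δ) := by
  obtain ⟨t, m, hm, rfl⟩ :=
    Nat.exists_eq_two_pow_mul_odd (n := δ) (by rintro rfl; exact lt_irrefl _ h)
  rw [bitKey_add_lt_iff hm] at h ⊢
  simp [testBit_add_two_pow_mul hm, h]

lemma mod_two_pow_eq_zero_of_add_eq {x y t m : ℕ} (hsum : x + y = 2 ^ t * m) (hm : Odd m)
    (hx : x.testBit t = true) (hy : y.testBit t = false) : x % 2 ^ t = 0 ∧ y % 2 ^ t = 0 := by
  have hP : 0 < 2 ^ t := Nat.two_pow_pos t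
  have hxq : x / 2 ^ t % 2 = 1 := by simpa [Nat.testBit_eq_decide_div_mod_eq] using hx
  have hyq : y / 2 ^ t % 2 = 0 := by simpa [Nat.testBit_eq_decide_div_mod_eq] using hy
  have hdiv := Nat.add_div (a := x) (b := y) hP
  have hmod := Nat.add_mod x y (2 ^ t)
  rw [hsum, Nat.mul_div_cancel_left _ hP] at hdiv
  rw [hsum, Nat.mul_mod_right] at hmod
  have hm2 := Nat.odd_iff.mp hm
  have hxr := Nat.mod_lt x hP
  have hyr := Nat.mod_lt y hP
  -- a carry into bit `t` would make `m` even
  split_ifs at hdiv with hcarry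
  · omega
  · rw [Nat.mod_eq_of_lt (by omega)] at hmod
    omega

lemma bitKey_lt_of_add_eq {B w δ : ℕ} (hsum : B + w = δ) (hB : bitKey (B + δ) < bitKey B)
    (hw : bitKey w < bitKey (w + δ)) : bitKey w < bitKey B := by
  obtain ⟨t, m, hm, rfl⟩ :=
    Nat.exists_eq_two_pow_mul_odd (n := δ) (by rintro rfl; exact lt_irrefl _ hB)
  rw [bitKey_add_lt_iff hm] at hB
  rw [bitKey_lt_add_iff hm] at hw
  obtain ⟨hB0, hw0⟩ := mod_two_pow_eq_zero_of_add_eq hsum hm hB hw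
  exact (bitKey_lt_bitKey_iff (hw0.trans hB0.symm) (by rw [hw, hB]; simp)).mpr hw

def natKey (n : ℕ) : ℕ ×ₗ Lex (ℕ → Bool) := toLex (Nat.log 8 n, bitKey n)

lemma natKey_injective : Injective natKey := fun _ _ h =>
  bitKey_injective (congrArg (fun p => (ofLex p).2) h)

lemma log_le_log_of_natKey_le {x y : ℕ} (h : natKey x ≤ natKey y) :
    Nat.log 8 x ≤ Nat.log 8 y :=
  (Prod.Lex.toLex_le_toLex'.mp h).1

lemma natKey_lt_iff {x y : ℕ} (h : Nat.log 8 x = Nat.log 8 y) :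
    natKey x < natKey y ↔ bitKey x < bitKey y := by
  simp [natKey, Prod.Lex.toLex_lt_toLex, h]

lemma natKey_le_iff {x y : ℕ} (h : Nat.log 8 x = Nat.log 8 y) :
    natKey x ≤ natKey y ↔ bitKey x ≤ bitKey y := by
  simp [natKey, Prod.Lex.toLex_le_toLex', h]

lemma log_le_log_add_one {x y : ℕ} (h : y ≤ 8 * x) : Nat.log 8 y ≤ Nat.log 8 x + 1 := by
  rcases Nat.eq_zero_or_pos x with rfl | hx
  · simp_all
  · rw [← Nat.log_mul_base (by norm_num) hx.ne', mul_comm]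
    exact Nat.log_mono_right h

lemma le_log_of_log_lt_of_lt_log_add {B x δ c : ℕ} (hsum : B + x = δ) (hx : Nat.log 8 x < c)
    (hc : c < Nat.log 8 (x + 3 * δ)) : c ≤ Nat.log 8 B := by
  have hx' : x < 8 ^ c := Nat.lt_pow_of_log_lt (by norm_num) hx
  have hc' : 8 ^ (c + 1) ≤ x + 3 * δ := Nat.pow_le_of_le_log (fun h0 => by simp [h0] at hc) hc
  rw [pow_succ] at hc'
  exact Nat.le_log_of_pow_le (by norm_num) (by omega)

lemma log_lt_log_of_natKey_lt_lt {x δ : ℕ} (h₀ : natKey x < natKey (x + δ))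
    (h₁ : natKey (x + δ) < natKey (x + δ + δ)) : Nat.log 8 x < Nat.log 8 (x + δ + δ) := by
  by_contra! hle
  have hlog₀ : Nat.log 8 x = Nat.log 8 (x + δ) :=
    (Nat.log_mono_right (by omega)).antisymm ((Nat.log_mono_right (by omega)).trans hle)
  have hlog₁ : Nat.log 8 (x + δ) = Nat.log 8 (x + δ + δ) :=
    (Nat.log_mono_right (by omega)).antisymm (hlog₀ ▸ hle)
  exact not_bitKey_lt_of_lt_add ((natKey_lt_iff hlog₀).mp h₀) ((natKey_lt_iff hlog₁).mp h₁)

lemma not_natKey_lt_of_add_lt {x δ : ℕ} (h : natKey (x + δ) < natKey x) :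
    ¬ natKey (x + δ + δ) < natKey (x + δ) := by
  intro h'
  have hlog₀ : Nat.log 8 (x + δ) = Nat.log 8 x :=
    (log_le_log_of_natKey_le h.le).antisymm (Nat.log_mono_right (by omega))
  have hlog₁ : Nat.log 8 (x + δ + δ) = Nat.log 8 (x + δ) :=
    (log_le_log_of_natKey_le h'.le).antisymm (Nat.log_mono_right (by omega))
  exact not_bitKey_lt_of_add_lt ((natKey_lt_iff hlog₀).mp h) ((natKey_lt_iff hlog₁).mp h')

def KeyAscending (a : ℕ → ℕ) (n : ℕ) : Prop := ∀ j < n, natKey (a j) < natKey (a (j + 1))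

lemma KeyAscending.log_lt_log {a : ℕ → ℕ} {δ n : ℕ} (ha : ∀ j, a (j + 1) = a j + δ)
    (h : KeyAscending a n) {j : ℕ} (hj : j + 2 ≤ n) :
    Nat.log 8 (a j) < Nat.log 8 (a (j + 2)) := by
  have h₀ := h j (by omega)
  have h₁ := h (j + 1) (by omega)
  rw [ha (j + 1), ha j] at h₁ ⊢
  rw [ha j] at h₀
  exact log_lt_log_of_natKey_lt_lt h₀ h₁

lemma not_keyAscending_of_le {a : ℕ → ℕ} {δ : ℕ} (ha : ∀ j, a (j + 1) = a j + δ)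
    (hδ : δ ≤ a 0) : ¬ KeyAscending a 4 := by
  intro h
  have h₀₂ : Nat.log 8 (a 0) < Nat.log 8 (a 2) := h.log_lt_log ha (by norm_num)
  have h₂₄ : Nat.log 8 (a 2) < Nat.log 8 (a 4) := h.log_lt_log ha (by norm_num)
  have h₀₄ : Nat.log 8 (a 4) ≤ Nat.log 8 (a 0) + 1 :=
    log_le_log_add_one (by rw [ha 3, ha 2, ha 1, ha 0]; omega)
  omega

lemma not_keyAscending_of_add_eq {a : ℕ → ℕ} {B δ : ℕ} (ha : ∀ j, a (j + 1) = a j + δ)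
    (hsum : B + a 0 = δ) (hB : natKey B ≤ natKey (a 0)) : ¬ KeyAscending a 4 := by
  intro h
  have h₀₂ : Nat.log 8 (a 0) < Nat.log 8 (a 2) := h.log_lt_log ha (by norm_num)
  have h₁₃ : Nat.log 8 (a 1) < Nat.log 8 (a 3) := h.log_lt_log ha (by norm_num)
  have h₂₄ : Nat.log 8 (a 2) < Nat.log 8 (a 4) := h.log_lt_log ha (by norm_num)
  have h₁₄ : Nat.log 8 (a 4) ≤ Nat.log 8 (a 1) + 1 :=
    log_le_log_add_one (by rw [ha 3, ha 2, ha 1, ha 0]; omega)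
  have ha₃ : a 3 = a 0 + 3 * δ := by rw [ha 2, ha 1, ha 0]; ring
  have hlogB : Nat.log 8 (a 1) ≤ Nat.log 8 B :=
    le_log_of_log_lt_of_lt_log_add hsum (by omega) (ha₃ ▸ h₁₃)
  have := log_le_log_of_natKey_le hB
  omega

lemma not_keyAscending_of_add_eq_of_lt {a : ℕ → ℕ} {B δ : ℕ} (ha : ∀ j, a (j + 1) = a j + δ)
    (hsum : B + a 0 = δ) (hB : natKey (B + δ) < natKey B) (hBa : natKey B ≤ natKey (a 0)) :
    ¬ KeyAscending a 3 := by
  intro h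
  have hlogBa := log_le_log_of_natKey_le hBa
  rcases lt_or_ge (Nat.log 8 (a 0)) (Nat.log 8 (a 1)) with h₀₁ | h₁₀
  · have h₁₃ : Nat.log 8 (a 1) < Nat.log 8 (a 3) := h.log_lt_log ha (by norm_num)
    have ha₃ : a 3 = a 0 + 3 * δ := by rw [ha 2, ha 1, ha 0]; ring
    have := le_log_of_log_lt_of_lt_log_add hsum h₀₁ (ha₃ ▸ h₁₃)
    omega
  · have hlog₀ : Nat.log 8 (a 0) = Nat.log 8 (a 0 + δ) :=
      (Nat.log_mono_right (by omega)).antisymm (ha 0 ▸ h₁₀)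
    have hw : bitKey (a 0) < bitKey (a 0 + δ) :=
      (natKey_lt_iff hlog₀).mp (ha 0 ▸ h 0 (by norm_num))
    have hlogB : Nat.log 8 (B + δ) = Nat.log 8 B :=
      (log_le_log_of_natKey_le hB.le).antisymm (Nat.log_mono_right (by omega))
    have hwB := bitKey_lt_of_add_eq hsum ((natKey_lt_iff hlogB).mp hB) hw
    have hlog : Nat.log 8 B = Nat.log 8 (a 0) :=
      hlogBa.antisymm (hlogB ▸ Nat.log_mono_right (by omega))
    exact hwB.not_ge ((natKey_le_iff hlog).mp hBa)

def intKey (v : ℤ) : (ℕ ×ₗ Lex (ℕ → Bool)) ×ₗ Bool :=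
  toLex (natKey v.natAbs, decide (v < 0))

lemma intKey_injective : Injective intKey := by
  intro v w h
  have habs : v.natAbs = w.natAbs := natKey_injective (congrArg (fun p => (ofLex p).1) h)
  have hsign : decide (v < 0) = decide (w < 0) := congrArg (fun p => (ofLex p).2) h
  simp only [decide_eq_decide] at hsign
  omega

lemma natKey_natAbs_le_of_intKey_lt {v w : ℤ} (h : intKey v < intKey w) :
    natKey v.natAbs ≤ natKey w.natAbs :=
  (Prod.Lex.toLex_lt_toLex'.mp h).1

lemma finite_setOf_intKey_lt (v : ℤ) : {u | intKey u < intKey v}.Finite := by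
  set N := 8 ^ (Nat.log 8 v.natAbs + 1)
  refine (Set.finite_Ioo (-(N : ℤ)) N).subset fun u hu => ?_
  have hlog := log_le_log_of_natKey_le (natKey_natAbs_le_of_intKey_lt hu)
  have : u.natAbs < N := (Nat.lt_pow_succ_log_self (by norm_num) _).trans_le
    (Nat.pow_le_pow_right (by norm_num) (by omega))
  simp only [Set.mem_Ioo]
  omega

lemma exists_intKey_lt (v : ℤ) : ∃ w, intKey v < intKey w := by
  refine ⟨8 ^ (Nat.log 8 v.natAbs + 1), Prod.Lex.toLex_lt_toLex.mpr (Or.inl ?_)⟩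
  refine Prod.Lex.toLex_lt_toLex.mpr (Or.inl ?_)
  simp [Int.natAbs_pow, Nat.log_pow]

lemma natAbs_succ_of_nonneg {b : ℕ → ℤ} {d : ℤ} (hb : ∀ j, b (j + 1) = b j + d) (hd : 0 < d)
    {s : ℕ} (hs : 0 ≤ b s) (j : ℕ) :
    (b (s + j + 1)).natAbs = (b (s + j)).natAbs + d.natAbs := by
  have hmono : Monotone b := monotone_nat_of_le_succ fun i => by rw [hb]; omega
  have := hmono (Nat.le_add_right s j)
  rw [hb]
  omega

lemma keyAscending_natAbs {b : ℕ → ℤ} {d : ℤ} (hb : ∀ j, b (j + 1) = b j + d) (hd : 0 < d)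
    {s n : ℕ} (hs : 0 ≤ b s)
    (H : ∀ j < s + n, natKey (b j).natAbs ≤ natKey (b (j + 1)).natAbs) :
    KeyAscending (fun j => (b (s + j)).natAbs) n := fun j hj =>
  (H (s + j) (by omega)).lt_of_ne <| natKey_injective.ne <| by
    rw [natAbs_succ_of_nonneg hb hd hs j]
    omega

lemma not_forall_natKey_natAbs_le {b : ℕ → ℤ} {d : ℤ} (hb : ∀ j, b (j + 1) = b j + d)
    (hd : d ≠ 0) : ¬ ∀ j < 5, natKey (b j).natAbs ≤ natKey (b (j + 1)).natAbs := by
  wlog hd' : 0 < d generalizing b d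
  · refine fun H => this (b := fun j => -b j) (d := -d) (fun j => by rw [hb]; ring)
      (neg_ne_zero.mpr hd) (by omega) (by simpa using H)
  intro H
  have h₀ : natKey (b 0).natAbs ≤ natKey (b 1).natAbs := H 0 (by norm_num)
  have h₁ : natKey (b 1).natAbs ≤ natKey (b 2).natAbs := H 1 (by norm_num)
  have hb₀ : b 1 = b 0 + d := hb 0
  have hb₁ : b 2 = b 1 + d := hb 1
  rcases le_or_gt 0 (b 0) with hs₀ | hs₀
  · exact not_keyAscending_of_le (natAbs_succ_of_nonneg hb hd' (s := 1) (by omega))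
      (by simp only [add_zero]; omega) (keyAscending_natAbs hb hd' (by omega) H)
  rcases le_or_gt 0 (b 1) with hs₁ | hs₁
  · exact not_keyAscending_of_add_eq (natAbs_succ_of_nonneg hb hd' hs₁) (B := (b 0).natAbs)
      (by simp only [add_zero]; omega) h₀ (keyAscending_natAbs hb hd' hs₁ H)
  rcases le_or_gt 0 (b 2) with hs₂ | hs₂
  · have hB : natKey ((b 1).natAbs + d.natAbs) < natKey (b 1).natAbs :=
      (show (b 0).natAbs = (b 1).natAbs + d.natAbs by omega) ▸
        h₀.lt_of_ne (natKey_injective.ne (by omega))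
    exact not_keyAscending_of_add_eq_of_lt (natAbs_succ_of_nonneg hb hd' hs₂)
      (by simp only [add_zero]; omega) hB h₁ (keyAscending_natAbs hb hd' hs₂ H)
  · have hB : natKey ((b 2).natAbs + d.natAbs) < natKey (b 2).natAbs :=
      (show (b 1).natAbs = (b 2).natAbs + d.natAbs by omega) ▸
        h₁.lt_of_ne (natKey_injective.ne (by omega))
    refine not_natKey_lt_of_add_lt hB ?_
    rw [show (b 2).natAbs + d.natAbs + d.natAbs = (b 0).natAbs by omega,
      show (b 2).natAbs + d.natAbs = (b 1).natAbs by omega]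
    exact h₀.lt_of_ne (natKey_injective.ne (by omega))

/-- For every `k ≥ 6` there exists a permutation of the integers avoiding
`k`-term arithmetic progressions. -/
theorem exists_perm_int_avoiding_kAP (k : ℕ) (hk : 6 ≤ k) :
    ∃ f : ℕ → ℤ, Function.Bijective f ∧ ¬ ContainsAPZ f k := by
  obtain ⟨f, hbij, hmono⟩ := exists_bijective_strictMono_comp intKey intKey_injective
    finite_setOf_intKey_lt exists_intKey_lt
  refine ⟨f, hbij, fun ⟨i, d, hd, hi, hstep⟩ => ?_⟩
  set b : ℕ → ℤ := fun j => f (i 0) + j * d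
  have hfb : ∀ j < k, f (i j) = b j := by
    intro j hj
    induction j with
    | zero => simp [b]
    | succ j ih => rw [hstep j hj, ih (by omega)]; simp only [b]; push_cast; ring
  refine not_forall_natKey_natAbs_le (b := b) (fun j => by simp only [b]; push_cast; ring) hd
    fun j hj => ?_
  rw [← hfb j (by omega), ← hfb (j + 1) (by omega)]
  exact natKey_natAbs_le_of_intKey_lt (hmono (hi j (j + 1) (by omega) (by omega)))
end

section
/- There exist a set S of integers and a bijection f : ℕ → S such that f avoids 3-term arithmetic progressions, the upper density of S is at least 1/2, and the lower density of S is at least 1/6. (Hence α_ℤ(3) ≥ 1/2 and β_ℤ(3) ≥ 1/6.) -/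
/-!
Let `S` be the union of the annuli `A k = {v : 3·5^k < |v| ≤ 5^(k+1)}`. Enumerate `A 0, A 1, …` in
turn, each as its positive half followed by its negative half, and each half in the order of a
3-AP-free permutation of an interval (evens before odds, recursively). Everything listed before
`A K` has modulus at most `5^K`, so a progression `x, y, z` with only `z ∈ A K` would give
`|z| = |2y - x| ≤ 3·5^K`, and one with `y, z ∈ A K` but `x` earlier would give
`|x| = |2y - z| > 5^K`; inside `A K` the signs and sizes rule out every mixed case.

`S ∩ [-5^K, 5^K]` has `5^K - 1` elements and `S` has no element of modulus in `(5^K, 3·5^K]`,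
which yields upper density `1/2` (at `n = 5^K`) and lower density `1/6` (at `n = 3·5^K`).
-/

open Filter Topology

def AvoidsThreeAP (l : List ℤ) : Prop :=
  ∀ x y z, [x, y, z].Sublist l → x + z ≠ 2 * y

namespace AvoidsThreeAP

variable {l l₁ l₂ : List ℤ}

theorem map {g : ℤ → ℤ} (hg : ∀ x y z, g x + g z = 2 * g y → x + z = 2 * y)
    (h : AvoidsThreeAP l) : AvoidsThreeAP (l.map g) := by
  intro x y z hs
  obtain ⟨l', hl', hxyz⟩ := List.sublist_map_iff.1 hs
  obtain ⟨x', y', z', rfl⟩ := List.length_eq_three.1 (by simpa using congrArg List.length hxyz.symm)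
  simp only [List.map_cons, List.map_nil, List.cons.injEq, and_true] at hxyz
  obtain ⟨rfl, rfl, rfl⟩ := hxyz
  exact fun he => h x' y' z' hl' (hg x' y' z' he)

theorem append (h₁ : AvoidsThreeAP l₁) (h₂ : AvoidsThreeAP l₂)
    (h₁₁₂ : ∀ x ∈ l₁, ∀ y ∈ l₁, ∀ z ∈ l₂, x + z ≠ 2 * y)
    (h₁₂₂ : ∀ x ∈ l₁, ∀ y ∈ l₂, ∀ z ∈ l₂, x + z ≠ 2 * y) :
    AvoidsThreeAP (l₁ ++ l₂) := by
  intro x y z hs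
  obtain ⟨r₁, r₂, hxyz, hr₁, hr₂⟩ := List.sublist_append_iff.1 hs
  match r₁, r₂, hxyz with
  | [], _, rfl => exact h₂ x y z hr₂
  | [_], _, rfl =>
    exact h₁₂₂ x (hr₁.subset (by simp)) y (hr₂.subset (by simp)) z (hr₂.subset (by simp))
  | [_, _], _, rfl =>
    exact h₁₁₂ x (hr₁.subset (by simp)) y (hr₁.subset (by simp)) z (hr₂.subset (by simp))
  | [_, _, _], _, rfl => exact h₁ x y z hr₁
  | _ :: _ :: _ :: _ :: _, _, h => simp at h

end AvoidsThreeAP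

def apFreePerm : ℕ → List ℤ
  | 0 => []
  | 1 => [0]
  | n + 2 => (apFreePerm ((n + 3) / 2)).map (2 * ·) ++ (apFreePerm ((n + 2) / 2)).map (2 * · + 1)

theorem length_apFreePerm (n : ℕ) : (apFreePerm n).length = n := by
  induction n using Nat.strong_induction_on with
  | _ n ih =>
    match n with
    | 0 | 1 => simp [apFreePerm]
    | n + 2 =>
      simp only [apFreePerm, List.length_append, List.length_map,
        ih _ (by omega : (n + 3) / 2 < n + 2), ih _ (by omega : (n + 2) / 2 < n + 2)]
      omega

theorem mem_apFreePerm {n : ℕ} {v : ℤ} : v ∈ apFreePerm n ↔ 0 ≤ v ∧ v < n := by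
  induction n using Nat.strong_induction_on generalizing v with
  | _ n ih =>
    match n with
    | 0 => simp [apFreePerm]
    | 1 =>
      simp only [apFreePerm, List.mem_singleton, Nat.cast_one]
      omega
    | n + 2 =>
      simp only [apFreePerm, List.mem_append, List.mem_map,
        ih _ (by omega : (n + 3) / 2 < n + 2), ih _ (by omega : (n + 2) / 2 < n + 2)]
      constructor
      · rintro (⟨a, ha, rfl⟩ | ⟨a, ha, rfl⟩) <;> omega
      · intro hv
        rcases Int.even_or_odd' v with ⟨a, rfl | rfl⟩
        · exact Or.inl ⟨a, by omega, rfl⟩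
        · exact Or.inr ⟨a, by omega, rfl⟩

theorem nodup_apFreePerm (n : ℕ) : (apFreePerm n).Nodup := by
  induction n using Nat.strong_induction_on with
  | _ n ih =>
    match n with
    | 0 | 1 => simp [apFreePerm]
    | n + 2 =>
      rw [apFreePerm, List.nodup_append]
      refine ⟨(ih _ (by omega)).map fun a b h => by omega,
        (ih _ (by omega)).map fun a b h => by omega, ?_⟩
      simp only [List.mem_map]
      rintro _ ⟨a, -, rfl⟩ _ ⟨b, -, rfl⟩
      omega

theorem avoidsThreeAP_apFreePerm (n : ℕ) : AvoidsThreeAP (apFreePerm n) := by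
  induction n using Nat.strong_induction_on with
  | _ n ih =>
    match n with
    | 0 | 1 => intro x y z h; simp [apFreePerm] at h
    | n + 2 =>
      rw [apFreePerm]
      refine ((ih _ (by omega)).map fun x y z h => by omega).append
        ((ih _ (by omega)).map fun x y z h => by omega) ?_ ?_ <;>
      · simp only [List.mem_map]
        rintro _ ⟨a, -, rfl⟩ _ ⟨b, -, rfl⟩ _ ⟨c, -, rfl⟩
        omega

def annulus (k : ℕ) : Set ℤ := {v | 3 * 5 ^ k < |v| ∧ |v| ≤ 5 ^ (k + 1)}

theorem bounds_of_mem_annulus {k : ℕ} {v : ℤ} (hv : v ∈ annulus k) :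
    (3 * 5 ^ k < v ∨ 3 * 5 ^ k < -v) ∧ -(5 * 5 ^ k) ≤ v ∧ v ≤ 5 * 5 ^ k := by
  rw [annulus, Set.mem_ofPred_eq, lt_abs, abs_le, pow_succ'] at hv
  exact ⟨hv.1, hv.2⟩

def block (k : ℕ) : List ℤ :=
  (apFreePerm (2 * 5 ^ k)).map (fun v => 3 * 5 ^ k + 1 + v) ++
    (apFreePerm (2 * 5 ^ k)).map (fun v => -(3 * 5 ^ k + 1 + v))

theorem mem_block {k : ℕ} {v : ℤ} : v ∈ block k ↔ v ∈ annulus k := by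
  have h5 : (5 : ℤ) ^ (k + 1) = 5 * 5 ^ k := pow_succ' 5 k
  simp only [block, List.mem_append, List.mem_map, mem_apFreePerm, annulus, Set.mem_ofPred_eq,
    lt_abs, abs_le, h5]
  push_cast
  constructor
  · rintro (⟨a, ha, rfl⟩ | ⟨a, ha, rfl⟩) <;> omega
  · intro hv
    rcases hv.1 with hpos | hneg
    · exact Or.inl ⟨v - (3 * 5 ^ k + 1), by omega, by omega⟩
    · exact Or.inr ⟨-v - (3 * 5 ^ k + 1), by omega, by omega⟩

theorem length_block (k : ℕ) : (block k).length = 4 * 5 ^ k := by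
  simp only [block, List.length_append, List.length_map, length_apFreePerm]
  omega

theorem nodup_block (k : ℕ) : (block k).Nodup := by
  rw [block, List.nodup_append]
  refine ⟨(nodup_apFreePerm _).map fun a b h => by omega,
    (nodup_apFreePerm _).map fun a b h => by omega, ?_⟩
  simp only [List.mem_map, mem_apFreePerm]
  push_cast
  rintro _ ⟨a, ha, rfl⟩ _ ⟨b, hb, rfl⟩
  omega

theorem avoidsThreeAP_block (k : ℕ) : AvoidsThreeAP (block k) := by
  rw [block]
  refine ((avoidsThreeAP_apFreePerm _).map fun x y z h => by omega).append
    ((avoidsThreeAP_apFreePerm _).map fun x y z h => by omega) ?_ ?_ <;>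
  · simp only [List.mem_map, mem_apFreePerm]
    push_cast
    rintro _ ⟨a, ha, rfl⟩ _ ⟨b, hb, rfl⟩ _ ⟨c, hc, rfl⟩
    omega

def blocksUpTo (K : ℕ) : List ℤ := (List.range K).flatMap block

theorem blocksUpTo_succ (K : ℕ) : blocksUpTo (K + 1) = blocksUpTo K ++ block K := by
  simp [blocksUpTo, List.range_succ]

theorem mem_blocksUpTo {K : ℕ} {v : ℤ} : v ∈ blocksUpTo K ↔ ∃ k < K, v ∈ annulus k := by
  simp [blocksUpTo, mem_block]

theorem abs_le_of_mem_blocksUpTo {K : ℕ} {v : ℤ} (hv : v ∈ blocksUpTo K) : |v| ≤ 5 ^ K := by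
  obtain ⟨k, hk, hv⟩ := mem_blocksUpTo.1 hv
  exact hv.2.trans (pow_le_pow_right₀ (by norm_num) hk)

theorem length_blocksUpTo (K : ℕ) : (blocksUpTo K).length = 5 ^ K - 1 := by
  induction K with
  | zero => rfl
  | succ K ih =>
    rw [blocksUpTo_succ, List.length_append, ih, length_block, pow_succ]
    have := Nat.one_le_pow K 5 (by norm_num)
    omega

theorem blocksUpTo_prefix {K L : ℕ} (h : K ≤ L) : blocksUpTo K <+: blocksUpTo L := by
  induction L, h using Nat.le_induction with
  | base => exact List.prefix_refl _
  | succ L _ ih => exact ih.trans (blocksUpTo_succ L ▸ List.prefix_append _ _)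

theorem nodup_blocksUpTo (K : ℕ) : (blocksUpTo K).Nodup := by
  induction K with
  | zero => exact List.nodup_nil
  | succ K ih =>
    rw [blocksUpTo_succ, List.nodup_append]
    refine ⟨ih, nodup_block K, fun x hx y hy hxy => ?_⟩
    have hx := abs_le_of_mem_blocksUpTo hx
    have hy := (mem_block.1 hy).1
    subst hxy
    have : (0 : ℤ) < 5 ^ K := by positivity
    linarith

theorem avoidsThreeAP_blocksUpTo (K : ℕ) : AvoidsThreeAP (blocksUpTo K) := by
  induction K with
  | zero => intro x y z h; simp [blocksUpTo] at h
  | succ K ih =>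
    rw [blocksUpTo_succ]
    refine ih.append (avoidsThreeAP_block K) ?_ ?_
    · intro x hx y hy z hz
      have hx := abs_le.1 (abs_le_of_mem_blocksUpTo hx)
      have hy := abs_le.1 (abs_le_of_mem_blocksUpTo hy)
      have hz := bounds_of_mem_annulus (mem_block.1 hz)
      omega
    · intro x hx y hy z hz
      have hx := abs_le.1 (abs_le_of_mem_blocksUpTo hx)
      have hy := bounds_of_mem_annulus (mem_block.1 hy)
      have hz := bounds_of_mem_annulus (mem_block.1 hz)
      omega

def apSeq (n : ℕ) : ℤ := (blocksUpTo (n + 1)).getD n 0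

theorem lt_length_blocksUpTo_succ (n : ℕ) : n < (blocksUpTo (n + 1)).length := by
  rw [length_blocksUpTo]
  have := Nat.lt_pow_self (n := n + 1) (a := 5) (by norm_num)
  omega

theorem apSeq_eq_getElem {K n : ℕ} (hn : n < (blocksUpTo K).length) :
    apSeq n = (blocksUpTo K)[n] := by
  rw [apSeq, List.getD_eq_getElem _ _ (lt_length_blocksUpTo_succ n),
    (blocksUpTo_prefix (le_max_left (n + 1) K)).getElem,
    (blocksUpTo_prefix (le_max_right (n + 1) K)).getElem]

theorem apSeq_injective : Function.Injective apSeq := by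
  intro a b h
  have hlen := lt_length_blocksUpTo_succ (max a b)
  rw [apSeq_eq_getElem ((le_max_left a b).trans_lt hlen),
    apSeq_eq_getElem ((le_max_right a b).trans_lt hlen)] at h
  exact (nodup_blocksUpTo _).getElem_inj_iff.1 h

theorem apSeq_add_ne {i j k : ℕ} (hij : i < j) (hjk : j < k) :
    apSeq i + apSeq k ≠ 2 * apSeq j := by
  have hk := lt_length_blocksUpTo_succ k
  rw [apSeq_eq_getElem ((hij.trans hjk).trans hk), apSeq_eq_getElem (hjk.trans hk),
    apSeq_eq_getElem hk]
  refine avoidsThreeAP_blocksUpTo (k + 1) _ _ _ ?_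
  simpa using List.map_getElem_sublist (l := blocksUpTo (k + 1))
    (is := [⟨i, (hij.trans hjk).trans hk⟩, ⟨j, hjk.trans hk⟩, ⟨k, hk⟩])
    (by simp [Fin.mk_lt_mk, hij, hjk, hij.trans hjk])

theorem range_apSeq : Set.range apSeq = ⋃ k, annulus k := by
  ext v
  simp only [Set.mem_range, Set.mem_iUnion]
  constructor
  · rintro ⟨n, rfl⟩
    have hmem := apSeq_eq_getElem (lt_length_blocksUpTo_succ n) ▸ List.getElem_mem _
    obtain ⟨k, -, hk⟩ := mem_blocksUpTo.1 hmem
    exact ⟨k, hk⟩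
  · rintro ⟨k, hk⟩
    obtain ⟨i, hi, rfl⟩ := List.getElem_of_mem (mem_blocksUpTo.2 ⟨k, k.lt_succ_self, hk⟩)
    exact ⟨i, apSeq_eq_getElem hi⟩

noncomputable def countIcc (S : Set ℤ) (n : ℕ) : ℕ := (S ∩ Set.Icc (-(n : ℤ)) n).ncard

theorem countIcc_le (S : Set ℤ) (n : ℕ) : countIcc S n ≤ 2 * n + 1 := by
  refine (Set.ncard_le_ncard Set.inter_subset_right (Set.finite_Icc _ _)).trans_eq ?_
  rw [← Finset.coe_Icc, Set.ncard_coe_finset, Int.card_Icc]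
  omega

theorem ncard_abs_mem_Ioc (a b : ℕ) : {v : ℤ | a < |v| ∧ |v| ≤ b}.ncard = 2 * (b - a) := by
  have h : {v : ℤ | a < |v| ∧ |v| ≤ b} = ↑(Finset.Ioc (a : ℤ) b ∪ Finset.Ico (-(b : ℤ)) (-a)) := by
    ext v
    simp only [Set.mem_ofPred_eq, lt_abs, abs_le, Finset.coe_union, Finset.coe_Ioc, Finset.coe_Ico,
      Set.mem_union, Set.mem_Ioc, Set.mem_Ico]
    omega
  rw [h, Set.ncard_coe_finset, Finset.card_union_of_disjoint, Int.card_Ioc, Int.card_Ico]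
  · omega
  · rw [Finset.disjoint_left]
    simp only [Finset.mem_Ioc, Finset.mem_Ico]
    omega

theorem countIcc_annuli_of_le {K n : ℕ} (h₁ : 5 ^ K ≤ n) (h₂ : n ≤ 5 ^ (K + 1)) :
    countIcc (⋃ k, annulus k) n = countIcc (⋃ k, annulus k) (5 ^ K) + 2 * (n - 3 * 5 ^ K) := by
  have hsplit : (⋃ k, annulus k) ∩ Set.Icc (-(n : ℤ)) n =
      ((⋃ k, annulus k) ∩ Set.Icc (-((5 ^ K : ℕ) : ℤ)) (5 ^ K : ℕ)) ∪
        {v : ℤ | ((3 * 5 ^ K : ℕ) : ℤ) < |v| ∧ |v| ≤ n} := by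
    have h₁ : (5 : ℤ) ^ K ≤ n := by exact_mod_cast h₁
    have h₂ : (n : ℤ) ≤ 5 ^ (K + 1) := by exact_mod_cast h₂
    ext v
    simp only [Set.mem_inter_iff, Set.mem_iUnion, Set.mem_Icc, Set.mem_union, Set.mem_ofPred_eq,
      annulus, ← abs_le]
    push_cast
    constructor
    · rintro ⟨⟨k, hk⟩, hv⟩
      rcases lt_trichotomy k K with hkK | rfl | hKk
      · exact Or.inl ⟨⟨k, hk⟩, hk.2.trans (pow_le_pow_right₀ (by norm_num) hkK)⟩
      · exact Or.inr ⟨hk.1, hv⟩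
      · have : (5 : ℤ) ^ (K + 1) ≤ 5 ^ k := pow_le_pow_right₀ (by norm_num) hKk
        linarith [hk.1, abs_nonneg v]
    · rintro (⟨hS, hv⟩ | ⟨h3, hv⟩)
      · exact ⟨hS, hv.trans h₁⟩
      · exact ⟨⟨K, h3, hv.trans h₂⟩, hv⟩
  have hdisj : Disjoint ((⋃ k, annulus k) ∩ Set.Icc (-((5 ^ K : ℕ) : ℤ)) (5 ^ K : ℕ))
      {v : ℤ | ((3 * 5 ^ K : ℕ) : ℤ) < |v| ∧ |v| ≤ n} := by
    refine Set.disjoint_left.2 fun v ⟨_, hv⟩ ⟨h3, _⟩ => ?_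
    have : (0 : ℤ) < 5 ^ K := by positivity
    push_cast at hv h3
    linarith [abs_le.2 hv]
  rw [countIcc, hsplit,
    Set.ncard_union_eq hdisj ((Set.finite_Icc _ _).subset Set.inter_subset_right)
      ((Set.finite_Icc (-(n : ℤ)) n).subset fun v hv => abs_le.1 hv.2),
    ncard_abs_mem_Ioc]
  rfl

theorem countIcc_annuli_pow (K : ℕ) : countIcc (⋃ k, annulus k) (5 ^ K) = 5 ^ K - 1 := by
  induction K with
  | zero =>
    have hempty : (⋃ k, annulus k) ∩ Set.Icc (-1 : ℤ) 1 = ∅ := by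
      refine Set.eq_empty_iff_forall_notMem.2 fun v ⟨hv, hv1⟩ => ?_
      obtain ⟨k, hk, -⟩ := Set.mem_iUnion.1 hv
      have := one_le_pow₀ (M₀ := ℤ) (n := k) (by norm_num : (1 : ℤ) ≤ 5)
      linarith [abs_le.2 hv1]
    rw [pow_zero, countIcc, Nat.cast_one, hempty, Set.ncard_empty, Nat.sub_self]
  | succ K ih =>
    rw [countIcc_annuli_of_le (Nat.pow_le_pow_right (by norm_num) K.le_succ) le_rfl, ih, pow_succ]
    have := Nat.one_le_pow K 5 (by norm_num)
    omega

theorem le_three_mul_countIcc_annuli (n : ℕ) : n ≤ 3 * countIcc (⋃ k, annulus k) n + 3 := by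
  rcases Nat.eq_zero_or_pos n with rfl | hn
  · omega
  have h₁ := Nat.pow_log_le_self 5 hn.ne'
  have h₂ := Nat.lt_pow_succ_log_self (by norm_num : 1 < 5) n
  rw [countIcc_annuli_of_le h₁ h₂.le, countIcc_annuli_pow]
  rw [pow_succ] at h₂
  omega

theorem tendsto_add_div_mul_add_atTop (a c d : ℝ) (hc : c ≠ 0) :
    Tendsto (fun x : ℝ => (x + a) / (c * x + d)) atTop (𝓝 (1 / c)) := by
  have hnum : Tendsto (fun x : ℝ => 1 + a * x⁻¹) atTop (𝓝 1) := by
    simpa using tendsto_const_nhds.add (tendsto_inv_atTop_zero.const_mul a)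
  have hden : Tendsto (fun x : ℝ => c + d * x⁻¹) atTop (𝓝 c) := by
    simpa using tendsto_const_nhds.add (tendsto_inv_atTop_zero.const_mul d)
  refine (hnum.div hden hc).congr' ?_
  filter_upwards [eventually_gt_atTop 0] with x hx
  rw [Pi.div_apply]
  field_simp

section LimitBounds

variable {ι κ : Type*} {l : Filter ι} {l' : Filter κ} {u : ι → ℝ} {a : ℝ}

theorem le_limsup_of_tendsto_of_le_comp [NeBot l'] {v : κ → ℝ} {φ : κ → ι}
    (hu : IsBoundedUnder (· ≤ ·) l u) (hφ : Tendsto φ l' l) (hv : Tendsto v l' (𝓝 a))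
    (hvu : ∀ k, v k ≤ u (φ k)) : a ≤ limsup u l :=
  le_of_forall_lt_imp_le_of_dense fun _ hb =>
    have hev := (hv.eventually (lt_mem_nhds hb)).mono fun k hk => hk.le.trans (hvu k)
    le_limsup_of_frequently_le (hφ.frequently hev.frequently) hu

theorem le_liminf_of_tendsto_of_le [NeBot l] {v : ι → ℝ} (hu : IsBoundedUnder (· ≤ ·) l u)
    (hv : Tendsto v l (𝓝 a)) (hvu : ∀ n, v n ≤ u n) : a ≤ liminf u l :=
  le_of_forall_lt_imp_le_of_dense fun _ hb => le_liminf_of_le hu.isCoboundedUnder_ge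
    ((hv.eventually (lt_mem_nhds hb)).mono fun n hn => hn.le.trans (hvu n))

end LimitBounds

noncomputable def densityIcc (S : Set ℤ) (n : ℕ) : ℝ := countIcc S n / (2 * n + 1)

theorem isBoundedUnder_le_densityIcc (S : Set ℤ) : IsBoundedUnder (· ≤ ·) atTop (densityIcc S) :=
  isBoundedUnder_of
    ⟨1, fun n => div_le_one_of_le₀ (by exact_mod_cast countIcc_le S n) (by positivity)⟩

theorem densityIcc_annuli_pow (K : ℕ) :
    densityIcc (⋃ k, annulus k) (5 ^ K) = ((5 : ℝ) ^ K + -1) / (2 * 5 ^ K + 1) := by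
  rw [densityIcc, countIcc_annuli_pow, Nat.cast_sub (Nat.one_le_pow K 5 (by norm_num))]
  push_cast
  ring

theorem le_densityIcc_annuli (n : ℕ) :
    ((n : ℝ) + -3) / (6 * n + 3) ≤ densityIcc (⋃ k, annulus k) n := by
  have h : (n : ℝ) ≤ 3 * countIcc (⋃ k, annulus k) n + 3 := by
    exact_mod_cast le_three_mul_countIcc_annuli n
  rw [densityIcc, div_le_div_iff₀ (by positivity) (by positivity)]
  nlinarith

theorem half_le_limsup_densityIcc_annuli : 1 / 2 ≤ limsup (densityIcc (⋃ k, annulus k)) atTop :=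
  le_limsup_of_tendsto_of_le_comp (isBoundedUnder_le_densityIcc _)
    (tendsto_pow_atTop_atTop_of_one_lt (by norm_num : 1 < 5))
    ((tendsto_add_div_mul_add_atTop (-1) 2 1 two_ne_zero).comp
      (tendsto_pow_atTop_atTop_of_one_lt (by norm_num : (1 : ℝ) < 5)))
    fun K => (densityIcc_annuli_pow K).ge

theorem sixth_le_liminf_densityIcc_annuli : 1 / 6 ≤ liminf (densityIcc (⋃ k, annulus k)) atTop :=
  le_liminf_of_tendsto_of_le (isBoundedUnder_le_densityIcc _)
    ((tendsto_add_div_mul_add_atTop (-3) 6 3 (by norm_num)).comp tendsto_natCast_atTop_atTop)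
    le_densityIcc_annuli

/-- α_ℤ(3) ≥ 1/2 and β_ℤ(3) ≥ 1/6 : there exist a set `S` of integers and a bijection
`f : ℕ → S` avoiding 3-term arithmetic progressions, with upper density of `S` at least
`1/2` and lower density at least `1/6`. -/
theorem density_int_avoid_3AP :
    ∃ (S : Set ℤ) (f : ℕ → ℤ),
      Function.Injective f ∧ Set.range f = S ∧
      (¬ ∃ (i₁ i₂ i₃ : ℕ) (d : ℤ), i₁ < i₂ ∧ i₂ < i₃ ∧ d ≠ 0 ∧
        f i₂ = f i₁ + d ∧ f i₃ = f i₂ + d) ∧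
      (1 / 2 : ℝ) ≤
        limsup (fun n : ℕ =>
          ((S ∩ Set.Icc (-(n : ℤ)) (n : ℤ)).ncard : ℝ) / (2 * n + 1)) atTop ∧
      (1 / 6 : ℝ) ≤
        liminf (fun n : ℕ =>
          ((S ∩ Set.Icc (-(n : ℤ)) (n : ℤ)).ncard : ℝ) / (2 * n + 1)) atTop := by
  refine ⟨_, apSeq, apSeq_injective, range_apSeq, ?_, half_le_limsup_densityIcc_annuli,
    sixth_le_liminf_densityIcc_annuli⟩
  rintro ⟨i, j, k, d, hij, hjk, -, hj, hk⟩
  exact apSeq_add_ne hij hjk (by omega)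
end

section
/- For every integer k > 1 and every bijection f from ℕ onto the set of positive integers, there exist indices i₁ < i₂ < i₃ and a nonzero integer d with k ∤ d such that f(i₂) = f(i₁) + d and f(i₃) = f(i₂) + d; that is, every permutation of the positive integers contains a 3-term arithmetic progression whose common difference is not divisible by k. -/
/-- For every integer `k > 1`, every permutation of the positive integers contains a
3-term arithmetic progression whose common difference is not divisible by `k`. -/
theorem perm_posint_contains_3AP_diff_not_div (k : ℤ) (hk : 1 < k)
    (f : ℕ → {m : ℤ // 0 < m}) (hf : Function.Bijective f) :
    ∃ (i₁ i₂ i₃ : ℕ) (d : ℤ), i₁ < i₂ ∧ i₂ < i₃ ∧ d ≠ 0 ∧ ¬ k ∣ d ∧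
      (f i₂ : ℤ) = (f i₁ : ℤ) + d ∧ (f i₃ : ℤ) = (f i₂ : ℤ) + d := by
  by_contra hcon
  push_neg at hcon
  have hinj : Function.Injective (fun j => (f j : ℤ)) := by
    intro a b hab
    exact hf.1 (Subtype.coe_injective hab)
  -- Key lemma: if i < j, f i < f j, k ∤ (f j - f i), then 2 f j - f i occurs before j
  have key : ∀ i j : ℕ, i < j → (f i : ℤ) < f j → ¬ k ∣ ((f j : ℤ) - f i) →
      ∃ l, l < j ∧ (f l : ℤ) = 2 * (f j : ℤ) - f i := by
    intro i j hij hlt hnd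
    have hpos : (0:ℤ) < 2 * (f j : ℤ) - f i := by
      have h1 := (f j).2; have h2 := (f i).2; linarith
    obtain ⟨l, hl⟩ := hf.2 ⟨2 * (f j : ℤ) - f i, hpos⟩
    have hlval : (f l : ℤ) = 2 * (f j : ℤ) - f i := by rw [hl]
    refine ⟨l, ?_, hlval⟩
    rcases lt_trichotomy l j with h | h | h
    · exact h
    · exfalso; rw [h] at hlval; linarith
    · exfalso
      have hd0 : (f j : ℤ) - f i ≠ 0 := by
        intro h0; exact hnd (by rw [h0]; exact dvd_zero k)
      exact hcon i j l ((f j : ℤ) - f i) hij h hd0 hnd (by ring) (by rw [hlval]; ring)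
  -- Main claim: all values are congruent mod k
  have main : ∀ i : ℕ, k ∣ ((f i : ℤ) - f 0) := by
    intro i
    set s0 := (Finset.range (i+1)).image (fun j => (f j : ℤ)) with hs0
    have hs0ne : s0.Nonempty :=
      ⟨f 0, Finset.mem_image.2 ⟨0, Finset.mem_range.2 (Nat.succ_pos i), rfl⟩⟩
    set B := s0.max' hs0ne with hB
    have hB1 : (1:ℤ) ≤ B := by
      have hm : (f 0 : ℤ) ∈ s0 :=
        Finset.mem_image.2 ⟨0, Finset.mem_range.2 (Nat.succ_pos i), rfl⟩
      have h0 := (f 0).2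
      linarith [Finset.le_max' s0 _ hm]
    set N := i + B.toNat with hN
    set s := (Finset.range (N+1)).image (fun j => (f j : ℤ)) with hs
    have hsne : s.Nonempty :=
      ⟨f 0, Finset.mem_image.2 ⟨0, Finset.mem_range.2 (Nat.succ_pos N), rfl⟩⟩
    set M := s.max' hsne with hM
    obtain ⟨jM, hjMr, hjMv⟩ := Finset.mem_image.1 (s.max'_mem hsne)
    have hjMN : jM ≤ N := Nat.lt_succ_iff.1 (Finset.mem_range.1 hjMr)
    have hcard : s.card = N + 1 := by
      rw [hs, Finset.card_image_of_injective _ hinj, Finset.card_range]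
    have hsub : s ⊆ Finset.Icc 1 M := by
      intro x hx
      obtain ⟨j, _, rfl⟩ := Finset.mem_image.1 hx
      refine Finset.mem_Icc.2 ⟨?_, Finset.le_max' s _ hx⟩
      have := (f j).2
      linarith
    have hMge : (N:ℤ) + 1 ≤ M := by
      have h1 : s.card ≤ (Finset.Icc (1:ℤ) M).card := Finset.card_le_card hsub
      rw [hcard, Int.card_Icc] at h1
      omega
    have htn : (B.toNat : ℤ) = B := Int.toNat_of_nonneg (by linarith)
    have hjMi : i < jM := by
      by_contra hle
      push_neg at hle
      have hmem : (f jM : ℤ) ∈ s0 :=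
        Finset.mem_image.2 ⟨jM, Finset.mem_range.2 (Nat.lt_succ_of_le hle), rfl⟩
      have h1 : (f jM : ℤ) ≤ B := Finset.le_max' s0 _ hmem
      rw [hjMv] at h1
      omega
    have cong : ∀ a : ℕ, a < jM → k ∣ (M - (f a : ℤ)) := by
      intro a ha
      by_contra hnd
      have haN : a ≤ N := le_trans (Nat.le_of_lt ha) hjMN
      have hamem : (f a : ℤ) ∈ s :=
        Finset.mem_image.2 ⟨a, Finset.mem_range.2 (Nat.lt_succ_of_le haN), rfl⟩
      have haM : (f a : ℤ) ≤ M := Finset.le_max' s _ hamem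
      have hane : (f a : ℤ) ≠ M := by
        intro h; apply hnd; rw [h]; simp
      have hlt : (f a : ℤ) < (f jM : ℤ) := by
        rw [hjMv]; exact lt_of_le_of_ne haM hane
      have hnd' : ¬ k ∣ ((f jM : ℤ) - f a) := by rw [hjMv]; exact hnd
      obtain ⟨l, hl, hlv⟩ := key a jM ha hlt hnd'
      have hlN : l ≤ N := le_trans (Nat.le_of_lt hl) hjMN
      have hlmem : (f l : ℤ) ∈ s :=
        Finset.mem_image.2 ⟨l, Finset.mem_range.2 (Nat.lt_succ_of_le hlN), rfl⟩
      have hlM : (f l : ℤ) ≤ M := Finset.le_max' s _ hlmem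
      rw [hjMv] at hlv
      have : (f a : ℤ) < M := lt_of_le_of_ne haM hane
      linarith
    have h1 := cong i hjMi
    have h2 := cong 0 (Nat.lt_of_le_of_lt (Nat.zero_le i) hjMi)
    have h3 := dvd_sub h2 h1
    have h4 : (M - (f 0 : ℤ)) - (M - (f i : ℤ)) = (f i : ℤ) - f 0 := by ring
    rwa [h4] at h3
  obtain ⟨i, hi⟩ := hf.2 ⟨(f 0 : ℤ) + 1, by linarith [(f 0).2]⟩
  have h1 : k ∣ ((f i : ℤ) - f 0) := main i
  have h2 : (f i : ℤ) = (f 0 : ℤ) + 1 := by rw [hi]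
  rw [h2] at h1
  have h3 : (f 0 : ℤ) + 1 - f 0 = 1 := by ring
  rw [h3] at h1
  have := Int.le_of_dvd one_pos h1
  omega
end

section
/- For all positive integers r and s and every bijection f from ℕ onto the set of positive integers, f contains an (r, s) 3-progression: there exist indices i₁ < i₂ < i₃ and a positive integer d such that f(i₂) = f(i₁) + r·d and f(i₃) = f(i₂) + s·d. -/
/-- For all positive integers `r` and `s`, every permutation of the positive integers
contains an `(r, s)` 3-progression with positive difference `d`. -/
theorem perm_posint_contains_rs_3prog (r s : ℕ) (hr : 0 < r) (hs : 0 < s)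
    (f : ℕ → {m : ℤ // 0 < m}) (hf : Function.Bijective f) :
    ∃ (i₁ i₂ i₃ : ℕ) (d : ℤ), i₁ < i₂ ∧ i₂ < i₃ ∧ 0 < d ∧
      (f i₂ : ℤ) = (f i₁ : ℤ) + r * d ∧ (f i₃ : ℤ) = (f i₂ : ℤ) + s * d := by
  by_contra hcon
  push_neg at hcon
  set e := Equiv.ofBijective f hf with he
  have hef : ∀ k, (e k : ℤ) = (f k : ℤ) := fun k => rfl
  have happ : ∀ v : {m : ℤ // 0 < m}, f (e.symm v) = v := fun v => e.apply_symm_apply v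
  -- key step from the negation: if pos w < pos v and v = w + r d (d > 0),
  -- then pos (v + s d) < pos v
  have step : ∀ (w v x : {m : ℤ // 0 < m}) (d : ℤ), 0 < d →
      (v : ℤ) = (w : ℤ) + r * d → (x : ℤ) = (v : ℤ) + s * d →
      e.symm w < e.symm v → e.symm x < e.symm v := by
    intro w v x d hd hv hx hlt
    rcases lt_trichotomy (e.symm x) (e.symm v) with h | h | h
    · exact h
    · exfalso
      have : x = v := e.symm.injective h
      have hsd : (s : ℤ) * d > 0 := by positivity
      rw [this] at hx; omega
    · exfalso
      have := hcon (e.symm w) (e.symm v) (e.symm x) d hlt h hd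
      rw [happ, happ, happ] at this
      exact this hv hx
  -- for each residue c, least index whose value is ≡ c (mod r)
  set K : ℕ → Set ℕ := fun c => {k | (f k : ℤ) % r = (c : ℤ)} with hK
  have hKne : ∀ c < r, (K c).Nonempty := by
    intro c hc
    obtain ⟨k, hk⟩ := hf.2 ⟨(c : ℤ) + r, by positivity⟩
    refine ⟨k, ?_⟩
    simp only [hK, Set.mem_setOf_eq, hk]
    have h1 : ((c:ℤ) + r) % r = (c:ℤ) % r := by simp
    rw [h1]
    exact Int.emod_eq_of_lt (by positivity) (by exact_mod_cast hc)
  set V : ℕ := (Finset.range r).sup (fun c => (f (sInf (K c)) : ℤ).toNat) with hV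
  have hVle : ∀ c < r, (f (sInf (K c)) : ℤ) ≤ (V : ℤ) := by
    intro c hc
    have h2 : ((f (sInf (K c)) : ℤ)).toNat ≤ V :=
      Finset.le_sup (f := fun c => (f (sInf (K c)) : ℤ).toNat) (Finset.mem_range.mpr hc)
    have hpos := (f (sInf (K c))).2
    omega
  -- descent on positions
  have main : ∀ p : ℕ, ∀ v : {m : ℤ // 0 < m}, e.symm v = p → (V : ℤ) < (v : ℤ) → False := by
    intro p
    induction p using Nat.strong_induction_on with
    | _ p ih =>
      intro v hvp hVv
      set c : ℕ := ((v : ℤ) % r).toNat with hc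
      have hcv : ((c : ℤ)) = (v : ℤ) % r := by
        rw [hc]
        exact Int.toNat_of_nonneg (Int.emod_nonneg _ (by exact_mod_cast hr.ne'))
      have hcr : c < r := by
        have h1 : (0:ℤ) < r := by exact_mod_cast hr
        have h2 := Int.emod_lt_of_pos (v : ℤ) h1
        rw [← hcv] at h2
        exact_mod_cast h2
      have hvK : e.symm v ∈ K c := by
        simp only [hK, Set.mem_setOf_eq, happ]
        exact hcv.symm
      set k₀ : ℕ := sInf (K c) with hk₀
      have hk₀mem : k₀ ∈ K c := Nat.sInf_mem ⟨_, hvK⟩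
      have hk₀le : k₀ ≤ e.symm v := Nat.sInf_le hvK
      set w : {m : ℤ // 0 < m} := f k₀ with hw
      have hwmod : (w : ℤ) % r = (c : ℤ) := hk₀mem
      have hwV : (w : ℤ) ≤ (V : ℤ) := hVle c hcr
      have hwv : (w : ℤ) < (v : ℤ) := by omega
      have hesymm : e.symm w = k₀ := e.symm_apply_apply k₀
      have hk₀lt : k₀ < e.symm v := by
        rcases lt_or_eq_of_le hk₀le with h | h
        · exact h
        · exfalso
          have : w = v := by rw [hw, h, happ]
          rw [this] at hwv; omega
      -- the difference
      obtain ⟨d, hd, hvwd⟩ : ∃ d : ℤ, 0 < d ∧ (v : ℤ) = (w : ℤ) + r * d := by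
        have hdvd : (r : ℤ) ∣ (v : ℤ) - (w : ℤ) := by
          apply Int.dvd_of_emod_eq_zero
          rw [Int.sub_emod, hwmod, ← hcv]
          simp
        obtain ⟨d, hd⟩ := hdvd
        have hr' : (0:ℤ) < r := by exact_mod_cast hr
        refine ⟨d, ?_, by omega⟩
        rcases le_or_gt d 0 with h | h
        · nlinarith
        · exact h
      have hxpos : (0:ℤ) < (v : ℤ) + s * d := by
        have := v.2
        have : (0:ℤ) < (s:ℤ) * d := by positivity
        omega
      set x : {m : ℤ // 0 < m} := ⟨(v : ℤ) + s * d, hxpos⟩ with hx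
      have hstep : e.symm x < e.symm v := by
        apply step w v x d hd hvwd rfl
        rw [hesymm]; exact hk₀lt
      refine ih (e.symm x) ?_ x rfl ?_
      · rw [← hvp]; exact hstep
      · have : (0:ℤ) < (s:ℤ) * d := by positivity
        simp only [hx]
        omega
  exact main (e.symm ⟨(V : ℤ) + 1, by positivity⟩) _ rfl (by simp)
end

section
/- For every integer k ≥ 3 and every positive integer n, θ_k((k−1)·n) ≥ (k−1)! · θ_k(n)^{k−1}. -/
/-!
Write `m = k - 1`. Given a permutation `τ` of the residues mod `m` and permutations
`σ 0, …, σ (m - 1)` of `Fin n` avoiding `k`-term progressions, fill the `b`-th block of `n`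
consecutive positions with the values `τ b + m * σ b i`. These data are recovered from the
result, which gives `m! θ_k(n)^m` distinct permutations of `Fin (m n)`. A `k`-term progression in
one of them has its first and last terms congruent mod `m`, hence in the same block; since blocks
are visited in order it lies in a single block, so its difference is a multiple of `m` and it
comes from a progression of `σ b`.
-/

/-- The value sequence of a permutation `σ` of `Fin n` avoids `k`-term arithmetic
progressions. -/
def AvoidsAP (k : ℕ) {n : ℕ} (σ : Equiv.Perm (Fin n)) : Prop :=
  ¬ ∃ (i : ℕ → Fin n) (d : ℤ), d ≠ 0 ∧ (∀ a b, a < b → b < k → i a < i b) ∧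
    ∀ j, j + 1 < k → ((σ (i (j + 1)) : ℕ) : ℤ) = ((σ (i j) : ℕ) : ℤ) + d

/-- `θ_k(n)`: the number of permutations of `{1, …, n}` avoiding `k`-term
arithmetic progressions. -/
noncomputable def theta (k n : ℕ) : ℕ :=
  Nat.card {σ : Equiv.Perm (Fin n) // AvoidsAP k σ}

open Equiv Function

lemma eq_add_mul_of_forall_succ_eq_add {R : Type*} [Semiring R] {u : ℕ → R} {d : R} {k : ℕ}
    (hu : ∀ j, j + 1 < k → u (j + 1) = u j + d) {j : ℕ} (hj : j < k) : u j = u 0 + j * d := by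
  induction j with
  | zero => simp
  | succ j ih => rw [hu j hj, ih (by omega), Nat.cast_succ, add_one_mul, add_assoc]

namespace Fin

variable {m n : ℕ}

lemma divNat_mono {p q : Fin (m * n)} (h : p ≤ q) : p.divNat ≤ q.divNat :=
  Nat.div_le_div_right (c := n) h

lemma modNat_lt_modNat {p q : Fin (m * n)} (hpq : p < q) (h : p.divNat = q.divNat) :
    p.modNat < q.modNat := by
  have hp := Nat.div_add_mod (p : ℕ) n
  have hq := Nat.div_add_mod (q : ℕ) n
  rw [show (p : ℕ) / n = q / n from congrArg Fin.val h] at hp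
  rw [lt_def] at hpq ⊢
  simp only [coe_modNat]
  omega

end Fin

section BlockPerm

variable {m n : ℕ}

def blockPerm (τ : Perm (Fin m)) (σ : Fin m → Perm (Fin n)) : Perm (Fin (m * n)) :=
  finProdFinEquiv.symm.trans <| (prodShear τ σ).trans <|
    (prodComm _ _).trans <| finProdFinEquiv.trans (finCongr (Nat.mul_comm n m))

lemma blockPerm_val (τ : Perm (Fin m)) (σ : Fin m → Perm (Fin n)) (p : Fin (m * n)) :
    (blockPerm τ σ p : ℕ) = τ p.divNat + m * σ p.divNat p.modNat := by
  simp [blockPerm]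

lemma blockPerm_val_mod (τ : Perm (Fin m)) (σ : Fin m → Perm (Fin n)) (p : Fin (m * n)) :
    ((blockPerm τ σ p : ℕ) : ℤ) % m = τ p.divNat := by
  rw [blockPerm_val]
  push_cast
  rw [Int.add_mul_emod_self_left, Int.emod_eq_of_lt (by positivity) (by exact_mod_cast (τ _).2)]

lemma blockPerm_injective2 (hn : 0 < n) : Injective2 (blockPerm (m := m) (n := n)) := by
  intro τ τ' σ σ' h
  have key (b : Fin m) (i : Fin n) : σ b i = σ' b i ∧ τ b = τ' b := by
    simpa [blockPerm] using congr($h (finProdFinEquiv (b, i)))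
  exact ⟨Equiv.ext fun b => (key b ⟨0, hn⟩).2, funext fun b => Equiv.ext fun i => (key b i).1⟩

lemma blockPerm_avoidsAP (hm : 0 < m) (τ : Perm (Fin m)) {σ : Fin m → Perm (Fin n)}
    (hσ : ∀ b, AvoidsAP (m + 1) (σ b)) : AvoidsAP (m + 1) (blockPerm τ σ) := by
  rintro ⟨i, d, hd, hmono, hAP⟩
  set v : ℕ → ℤ := fun j => (blockPerm τ σ (i j) : ℕ)
  have hlast : v m = v 0 + m * d := eq_add_mul_of_forall_succ_eq_add hAP (by omega)
  have hend : (i m).divNat = (i 0).divNat := by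
    refine τ.injective (Fin.ext ?_)
    rw [← Int.natCast_inj, ← blockPerm_val_mod, ← blockPerm_val_mod]
    change v m % m = v 0 % m
    rw [hlast, Int.add_mul_emod_self_left]
  have hle : ∀ a c, a ≤ c → c ≤ m → i a ≤ i c := fun a c hac hc =>
    hac.eq_or_lt.elim (fun h => h ▸ le_rfl) fun h => (hmono a c h (by omega)).le
  have hblock : ∀ j ≤ m, (i j).divNat = (i 0).divNat := fun j hj =>
    le_antisymm (hend ▸ Fin.divNat_mono (hle j m hj le_rfl))
      (Fin.divNat_mono (hle 0 j j.zero_le hj))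
  obtain ⟨d', rfl⟩ : (m : ℤ) ∣ d := by
    have hstep : v 1 = v 0 + d := hAP 0 (by omega)
    have hres : v 0 ≡ v 1 [ZMOD m] := by
      rw [Int.ModEq, blockPerm_val_mod, blockPerm_val_mod, hblock 1 hm]
    simpa [hstep] using hres.dvd
  refine hσ (i 0).divNat ⟨fun j => (i j).modNat, d', right_ne_zero_of_mul hd, ?_, ?_⟩
  · intro a c hac hc
    refine Fin.modNat_lt_modNat (hmono a c hac hc) ?_
    rw [hblock a (by omega), hblock c (by omega)]
  · intro j hj
    have hstep : v (j + 1) = v j + m * d' := hAP j hj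
    simp only [v, blockPerm_val, hblock j (by omega), hblock (j + 1) (by omega)] at hstep
    push_cast at hstep
    have hscaled : (m : ℤ) * (σ (i 0).divNat (i (j + 1)).modNat : ℕ)
        = m * ((σ (i 0).divNat (i j).modNat : ℕ) + d') := by linarith
    exact mul_left_cancel₀ (by exact_mod_cast hm.ne') hscaled

end BlockPerm

/-- `θ_k((k−1)n) ≥ (k−1)! ⬝ θ_k(n)^{k−1}` for `k ≥ 3` and `n ≥ 1`. -/
theorem theta_rec (k n : ℕ) (hk : 3 ≤ k) (hn : 0 < n) :
    (k - 1).factorial * theta k n ^ (k - 1) ≤ theta k ((k - 1) * n) := by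
  obtain ⟨m, rfl⟩ : ∃ m, k = m + 1 := ⟨k - 1, by omega⟩
  rw [Nat.add_sub_cancel]
  let Avoiding (N : ℕ) := {σ : Perm (Fin N) // AvoidsAP (m + 1) σ}
  let build (x : Perm (Fin m) × (Fin m → Avoiding n)) : Avoiding (m * n) :=
    ⟨blockPerm x.1 fun b => x.2 b, blockPerm_avoidsAP (by omega) x.1 fun b => (x.2 b).2⟩
  have hbuild : Injective build := fun x y h => by
    obtain ⟨h₁, h₂⟩ := blockPerm_injective2 hn (congrArg Subtype.val h)
    exact Prod.ext h₁ (funext fun b => Subtype.ext (congrFun h₂ b))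
  calc m.factorial * theta (m + 1) n ^ m = Nat.card (Perm (Fin m) × (Fin m → Avoiding n)) := by
        simp [Avoiding, theta, Nat.card_fun, Nat.card_eq_fintype_card, Fintype.card_perm]
    _ ≤ theta (m + 1) (m * n) := Nat.card_le_card_of_injective build hbuild
end

section
/- For every integer k ≥ 3 and every positive integer n, θ_k((k−1)^n) ≥ ((k−1)!)^{Σ_{i=0}^{n−1} (k−1)^i}. -/
section Construction

variable {m N : ℕ}

/-- The block construction: position `(c, p)` (i.e. `c*N + p`) gets value `m * σ_c(p) + τ(c)`. -/
def bigPerm (τ : Equiv.Perm (Fin m)) (σ : Fin m → Equiv.Perm (Fin N)) :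
    Equiv.Perm (Fin (m * N)) :=
  finProdFinEquiv.symm.trans
    (((Equiv.prodShear τ σ).trans (Equiv.prodComm (Fin m) (Fin N))).trans
      (finProdFinEquiv.trans (finCongr (Nat.mul_comm N m))))

lemma bigPerm_apply (τ : Equiv.Perm (Fin m)) (σ : Fin m → Equiv.Perm (Fin N))
    (c : Fin m) (p : Fin N) :
    ((bigPerm τ σ) (finProdFinEquiv (c, p)) : ℕ) = m * (σ c p) + (τ c) := by
  simp [bigPerm, Nat.add_comm, Nat.mul_comm]

lemma lt_helper {c c' : Fin m} {p p' : Fin N}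
    (h : (finProdFinEquiv (c, p) : Fin (m * N)) < finProdFinEquiv (c', p')) :
    (p : ℕ) + N * c < (p' : ℕ) + N * c' := by
  have := Fin.lt_def.mp h
  simpa [finProdFinEquiv] using this

lemma block_le {c c' : Fin m} {p p' : Fin N}
    (h : (finProdFinEquiv (c, p) : Fin (m * N)) < finProdFinEquiv (c', p')) : c ≤ c' := by
  by_contra hc
  push_neg at hc
  have h0 := lt_helper h
  have h1 : (p' : ℕ) + N * c' < p + N * c := by
    calc (p' : ℕ) + N * c' < N + N * c' := by omega
    _ = N * (c' + 1) := by ring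
    _ ≤ N * c := Nat.mul_le_mul_left _ hc
    _ ≤ p + N * c := by omega
  omega

lemma pos_lt {c : Fin m} {p p' : Fin N}
    (h : (finProdFinEquiv (c, p) : Fin (m * N)) < finProdFinEquiv (c, p')) : p < p' := by
  have h' := lt_helper h
  exact Fin.lt_def.mpr (by omega)

lemma bigPerm_avoids (hm : 2 ≤ m) (τ : Equiv.Perm (Fin m)) (σ : Fin m → Equiv.Perm (Fin N))
    (hσ : ∀ c, AvoidsAP (m + 1) (σ c)) : AvoidsAP (m + 1) (bigPerm τ σ) := by
  rintro ⟨i, d, hd, hmono, hap⟩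
  set c : ℕ → Fin m := fun j => (finProdFinEquiv.symm (i j)).1 with hc
  set p : ℕ → Fin N := fun j => (finProdFinEquiv.symm (i j)).2 with hp
  have hi : ∀ j, i j = finProdFinEquiv (c j, p j) :=
    fun j => (finProdFinEquiv.apply_symm_apply (i j)).symm
  have hval : ∀ j, ((bigPerm τ σ) (i j) : ℕ) = m * (σ (c j) (p j)) + (τ (c j)) := fun j => by
    rw [hi j]; exact bigPerm_apply ..
  set v : ℕ → ℕ := fun j => ((bigPerm τ σ) (i j) : ℕ) with hv
  have hvj : ∀ j, j ≤ m → (v j : ℤ) = v 0 + j * d := by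
    intro j hj
    induction j with
    | zero => simp
    | succ j ih =>
      have h1 := hap j (by omega)
      have h2 := ih (by omega)
      show ((v (j+1) : ℕ) : ℤ) = _
      rw [show ((v (j+1) : ℕ) : ℤ) = ((v j : ℕ) : ℤ) + d from h1, h2]
      push_cast; ring
  have hcm : ∀ a b, a < b → b ≤ m → c a ≤ c b := fun a b hab hb =>
    block_le (by rw [← hi a, ← hi b]; exact hmono a b hab (by omega))
  have hres : ∀ j, (v j) % m = τ (c j) := by
    intro j
    rw [show v j = m * (σ (c j) (p j)) + (τ (c j)) from hval j, Nat.mul_add_mod]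
    exact Nat.mod_eq_of_lt (τ (c j)).isLt
  have hcc : ∀ a b, (v a : ℤ) % m = (v b : ℤ) % m → c a = c b := by
    intro a b h
    have h' : v a % m = v b % m := by
      have := h
      rw [← Int.natCast_mod, ← Int.natCast_mod] at this
      exact_mod_cast this
    rw [hres a, hres b] at h'
    exact τ.injective (Fin.val_injective h')
  by_cases hdm : (m : ℤ) ∣ d
  · obtain ⟨e, rfl⟩ := hdm
    have he : e ≠ 0 := by rintro rfl; simp at hd
    have hceq : ∀ j, j ≤ m → c j = c 0 := by
      intro j hj
      refine hcc j 0 ?_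
      rw [hvj j hj,
        show ((v 0 : ℕ) : ℤ) + (j : ℤ) * ((m : ℤ) * e) = ((v 0 : ℕ) : ℤ) + (m : ℤ) * ((j : ℤ) * e)
          by ring, Int.add_mul_emod_self_left]
    refine hσ (c 0) ⟨p, e, he, ?_, ?_⟩
    · intro a b hab hb
      have h := hmono a b hab hb
      rw [hi a, hi b, hceq a (by omega), hceq b (by omega)] at h
      exact pos_lt h
    · intro j hj
      have h1 := hap j hj
      rw [show ((bigPerm τ σ) (i (j+1)) : ℕ) = v (j+1) from rfl,
        show ((bigPerm τ σ) (i j) : ℕ) = v j from rfl] at h1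
      rw [show v (j+1) = m * (σ (c (j+1)) (p (j+1))) + (τ (c (j+1))) from hval (j+1),
        show v j = m * (σ (c j) (p j)) + (τ (c j)) from hval j,
        hceq (j+1) (by omega), hceq j (by omega)] at h1
      push_cast at h1
      have hm0 : (m : ℤ) ≠ 0 := by positivity
      refine mul_left_cancel₀ hm0 ?_
      linarith
  · have hc1 : c 1 = c 0 := by
      have hcm0 : c m = c 0 := by
        refine hcc m 0 ?_
        rw [hvj m le_rfl]
        simp [Int.add_mul_emod_self_left]
      have h01 : c 0 ≤ c 1 := hcm 0 1 (by omega) (by omega)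
      have h1m : c 1 ≤ c m := hcm 1 m (by omega) le_rfl
      exact le_antisymm (hcm0 ▸ h1m) h01
    apply hdm
    have h1 : (v 1 : ℤ) = v 0 + d := by have := hvj 1 (by omega); push_cast at this ⊢; linarith
    have h2 : (v 1 : ℤ) % m = (v 0 : ℤ) % m := by
      rw [← Int.natCast_mod, ← Int.natCast_mod, hres 1, hres 0, hc1]
    have h3 : (m : ℤ) ∣ (v 0 : ℤ) - (v 1 : ℤ) := Int.ModEq.dvd h2
    rw [h1, show ((v 0 : ℕ) : ℤ) - (((v 0 : ℕ) : ℤ) + d) = -d by ring] at h3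
    exact dvd_neg.mp h3

lemma encode_inj (hm : 0 < m) {a a' r r' : ℕ} (hr : r < m) (hr' : r' < m)
    (h : m * a + r = m * a' + r') : a = a' ∧ r = r' := by
  have h1 : r = r' := by
    have := congrArg (· % m) h
    simpa [Nat.mul_add_mod, Nat.mod_eq_of_lt hr, Nat.mod_eq_of_lt hr'] using this
  subst h1
  exact ⟨Nat.eq_of_mul_eq_mul_left hm (by omega), rfl⟩

lemma bigPerm_injective (hm : 0 < m) (hN : 0 < N) {τ τ' : Equiv.Perm (Fin m)}
    {σ σ' : Fin m → Equiv.Perm (Fin N)} (h : bigPerm τ σ = bigPerm τ' σ') :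
    τ = τ' ∧ σ = σ' := by
  have key : ∀ (c : Fin m) (p : Fin N),
      m * (σ c p : ℕ) + (τ c : ℕ) = m * (σ' c p : ℕ) + (τ' c : ℕ) := by
    intro c p
    rw [← bigPerm_apply τ σ c p, ← bigPerm_apply τ' σ' c p, h]
  have key2 : ∀ (c : Fin m) (p : Fin N), σ c p = σ' c p ∧ τ c = τ' c := by
    intro c p
    obtain ⟨h1, h2⟩ := encode_inj hm (τ c).isLt (τ' c).isLt (key c p)
    exact ⟨Fin.val_injective h1, Fin.val_injective h2⟩
  refine ⟨Equiv.ext fun c => (key2 c ⟨0, hN⟩).2,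
    funext fun c => Equiv.ext fun p => (key2 c p).1⟩

set_option maxHeartbeats 1000000 in
lemma theta_step (m N : ℕ) (hm : 2 ≤ m) (hN : 0 < N) :
    m.factorial * (theta (m + 1) N) ^ m ≤ theta (m + 1) (m * N) := by
  classical
  have hinj : Function.Injective
      (fun ts : Equiv.Perm (Fin m) × (Fin m → {σ : Equiv.Perm (Fin N) // AvoidsAP (m+1) σ}) =>
        (⟨bigPerm ts.1 (fun c => (ts.2 c).1), bigPerm_avoids hm _ _ (fun c => (ts.2 c).2)⟩ :
          {S : Equiv.Perm (Fin (m*N)) // AvoidsAP (m+1) S})) := by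
    rintro ⟨τ, σ⟩ ⟨τ', σ'⟩ h
    simp only [Subtype.mk.injEq] at h
    obtain ⟨h1, h2⟩ := bigPerm_injective (by omega) hN h
    refine Prod.ext h1 (funext fun c => Subtype.ext ?_)
    exact congrFun h2 c
  have hcard := Nat.card_le_card_of_injective _ hinj
  rw [Nat.card_prod, Nat.card_pi] at hcard
  simp only [Finset.prod_const, Finset.card_univ, Fintype.card_fin] at hcard
  rw [Nat.card_eq_fintype_card, Fintype.card_perm, Fintype.card_fin] at hcard
  exact hcard

lemma theta_one_le (k : ℕ) (hk : 3 ≤ k) : 1 ≤ theta k 1 := by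
  have hne : Nonempty {σ : Equiv.Perm (Fin 1) // AvoidsAP k σ} := by
    refine ⟨1, ?_⟩
    rintro ⟨i, d, hd, hmono, hap⟩
    have h := hmono 0 1 (by omega) (by omega)
    have : i 0 = i 1 := Subsingleton.elim _ _
    rw [this] at h
    exact lt_irrefl _ h
  exact Nat.one_le_iff_ne_zero.mpr (Nat.card_ne_zero.mpr ⟨hne, inferInstance⟩)

end Construction

/-- `θ_k((k−1)^n) ≥ ((k−1)!)^{Σ_{i=0}^{n−1}(k−1)^i}` for `k ≥ 3` and `n ≥ 1`. -/
theorem theta_pow (k n : ℕ) (hk : 3 ≤ k) (hn : 0 < n) :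
    (k - 1).factorial ^ (∑ i ∈ Finset.range n, (k - 1) ^ i) ≤ theta k ((k - 1) ^ n) := by
  obtain ⟨m, rfl⟩ : ∃ m, k = m + 1 := ⟨k - 1, by omega⟩
  have hm : 2 ≤ m := by omega
  simp only [Nat.add_sub_cancel]
  clear hn
  induction n with
  | zero => simpa using theta_one_le (m + 1) hk
  | succ n ih =>
    have hsum : (∑ i ∈ Finset.range (n + 1), m ^ i) = m * (∑ i ∈ Finset.range n, m ^ i) + 1 :=
      geom_sum_succ
    rw [hsum]
    conv_rhs => rw [pow_succ']
    calc m.factorial ^ (m * (∑ i ∈ Finset.range n, m ^ i) + 1)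
        = m.factorial * (m.factorial ^ (∑ i ∈ Finset.range n, m ^ i)) ^ m := by
          rw [pow_succ, ← pow_mul, Nat.mul_comm (∑ i ∈ Finset.range n, m ^ i) m]
          ring
      _ ≤ m.factorial * (theta (m + 1) (m ^ n)) ^ m :=
          Nat.mul_le_mul_left _ (Nat.pow_le_pow_left ih m)
      _ ≤ theta (m + 1) (m * m ^ n) := theta_step m (m ^ n) hm (pow_pos (by omega) n)
end

section
/- For all odd positive integers r and s and every positive integer n, there exists a bijection σ : {1,…,n} → {1,…,n} such that the sequence σ(1), …, σ(n) avoids (r, s) 3-progressions. -/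
/-!
Order ℕ 2-adically: `a` precedes `b` when, at the lowest binary digit where they differ, `a` has
a `0` and `b` has a `1`. If `b - a = r d` and `c - b = s d` with `r`, `s` odd, both differences
have the same 2-adic valuation `k` as `d`, so `a`, `b`, `c` agree below digit `k` while digit `k`
of `b` differs from that of `a` and of `c`. Hence `b` comes either before or after both `a` and
`c`, and listing `1, …, n` in this order avoids every `(r, s)` 3-progression.
-/

theorem Int.exists_eq_two_pow_mul_odd {d : ℤ} (hd : d ≠ 0) : ∃ k e, Odd e ∧ d = 2 ^ k * e := by
  obtain ⟨e, hde, he⟩ :=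
    (Int.finiteMultiplicity_iff (a := 2).mpr ⟨by decide, hd⟩).exists_eq_pow_mul_and_not_dvd
  exact ⟨_, e, Int.not_even_iff_odd.mp (by rwa [even_iff_two_dvd]), hde⟩

theorem Nat.testBit_eq_of_lt_and_ne_of_sub_eq_two_pow_mul_odd {a b k : ℕ} {m : ℤ} (hm : Odd m)
    (h : (b : ℤ) - a = 2 ^ k * m) :
    (∀ j < k, a.testBit j = b.testBit j) ∧ a.testBit k ≠ b.testBit k := by
  induction k generalizing a b with
  | zero =>
    obtain ⟨t, rfl⟩ := hm
    simp only [Nat.not_lt_zero, IsEmpty.forall_iff, implies_true, Nat.testBit_zero, ne_eq,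
      decide_eq_decide, true_and]
    omega
  | succ k ih =>
    replace h : (b : ℤ) - a = 2 * (2 ^ k * m) := by rw [h]; ring
    obtain ⟨ihlow, ihk⟩ := ih (a := a / 2) (b := b / 2) (by omega)
    refine ⟨fun j hj => ?_, by simpa only [Nat.testBit_succ] using ihk⟩
    cases j with
    | zero => simp only [Nat.testBit_zero, show a % 2 = b % 2 by omega]
    | succ j => simpa only [Nat.testBit_succ] using ihlow j (by omega)

def Nat.bitsLex (v : ℕ) : Lex (ℕ → Bool) := toLex v.testBit

theorem Nat.bitsLex_lt_of_testBit_lt {a b k : ℕ} (hlow : ∀ j < k, a.testBit j = b.testBit j)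
    (hk : a.testBit k < b.testBit k) : a.bitsLex < b.bitsLex :=
  ⟨k, hlow, hk⟩

theorem Nat.not_bitsLex_le_le_of_progression {r s a b c : ℕ} {d : ℤ} (hr : Odd r) (hs : Odd s)
    (hd : d ≠ 0) (hab : (b : ℤ) = a + r * d) (hbc : (c : ℤ) = b + s * d) :
    ¬ (a.bitsLex ≤ b.bitsLex ∧ b.bitsLex ≤ c.bitsLex) := by
  obtain ⟨k, e, he, rfl⟩ := Int.exists_eq_two_pow_mul_odd hd
  obtain ⟨hablow, habk⟩ := Nat.testBit_eq_of_lt_and_ne_of_sub_eq_two_pow_mul_odd (a := a) (b := b)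
    ((Int.odd_coe_nat r).mpr hr |>.mul he) (by linear_combination hab)
  obtain ⟨hbclow, hbck⟩ := Nat.testBit_eq_of_lt_and_ne_of_sub_eq_two_pow_mul_odd (a := b) (b := c)
    ((Int.odd_coe_nat s).mpr hs |>.mul he) (by linear_combination hbc)
  rintro ⟨hle₁, hle₂⟩
  cases hb : b.testBit k
  · refine not_le_of_gt (Nat.bitsLex_lt_of_testBit_lt (fun j hj => (hablow j hj).symm) ?_) hle₁
    cases ha : a.testBit k <;> simp_all
  · refine not_le_of_gt (Nat.bitsLex_lt_of_testBit_lt (fun j hj => (hbclow j hj).symm) ?_) hle₂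
    cases hc : c.testBit k <;> simp_all

theorem exists_bijOn_Icc_monotoneOn_comp {α : Type*} [LinearOrder α] (f : ℕ → α) (n : ℕ) :
    ∃ σ : ℕ → ℕ, Set.BijOn σ (Set.Icc 1 n) (Set.Icc 1 n) ∧ MonotoneOn (f ∘ σ) (Set.Icc 1 n) := by
  let π := Tuple.sort (fun i : Fin n => f ((i : ℕ) + 1))
  let σ : ℕ → ℕ := fun i => if h : i - 1 < n then π ⟨i - 1, h⟩ + 1 else i
  have hσ : ∀ i (hi : i ∈ Set.Icc 1 n), σ i = π ⟨i - 1, by grind⟩ + 1 := fun i hi => dif_pos _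
  have hmaps : Set.MapsTo σ (Set.Icc 1 n) (Set.Icc 1 n) := fun i hi => by
    rw [hσ i hi]; exact ⟨by omega, (π _).isLt⟩
  refine ⟨σ, (Set.finite_Icc 1 n).injOn_iff_bijOn_of_mapsTo hmaps |>.mp fun i hi j hj hij => ?_,
    fun i hi j hj hij => ?_⟩
  · rw [hσ i hi, hσ j hj, add_left_inj, Fin.val_inj, π.apply_eq_iff_eq, Fin.mk.injEq] at hij
    grind
  · simp only [Function.comp_apply, hσ i hi, hσ j hj]
    exact Tuple.monotone_sort (fun i : Fin n => f ((i : ℕ) + 1))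
      (show (⟨i - 1, _⟩ : Fin n) ≤ ⟨j - 1, _⟩ from Fin.mk_le_mk.mpr (by omega))

theorem exists_finite_perm_avoiding_rs_3prog_general (r s n : ℕ)
    (hrodd : Odd r) (hsodd : Odd s) :
    ∃ σ : ℕ → ℕ, Set.BijOn σ (Set.Icc 1 n) (Set.Icc 1 n) ∧
      ¬ ∃ i₁ i₂ i₃, i₁ ∈ Set.Icc 1 n ∧ i₂ ∈ Set.Icc 1 n ∧ i₃ ∈ Set.Icc 1 n ∧
        i₁ < i₂ ∧ i₂ < i₃ ∧ ∃ d : ℤ, d ≠ 0 ∧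
          (σ i₂ : ℤ) = (σ i₁ : ℤ) + r * d ∧ (σ i₃ : ℤ) = (σ i₂ : ℤ) + s * d := by
  obtain ⟨σ, hbij, hmono⟩ := exists_bijOn_Icc_monotoneOn_comp Nat.bitsLex n
  refine ⟨σ, hbij, ?_⟩
  rintro ⟨i₁, i₂, i₃, h₁, h₂, h₃, h₁₂, h₂₃, d, hd, hab, hbc⟩
  exact Nat.not_bitsLex_le_le_of_progression hrodd hsodd hd hab hbc
    ⟨hmono h₁ h₂ h₁₂.le, hmono h₂ h₃ h₂₃.le⟩

/-- For all odd positive integers `r` and `s` and every `n ≥ 1`, there is a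
permutation of `{1, …, n}` avoiding `(r, s)` 3-progressions. -/
theorem exists_finite_perm_avoiding_rs_3prog (r s n : ℕ)
    (hrodd : Odd r) (hr : 0 < r) (hsodd : Odd s) (hs : 0 < s) (hn : 0 < n) :
    ∃ σ : ℕ → ℕ, Set.BijOn σ (Set.Icc 1 n) (Set.Icc 1 n) ∧
      ¬ ∃ i₁ i₂ i₃, i₁ ∈ Set.Icc 1 n ∧ i₂ ∈ Set.Icc 1 n ∧ i₃ ∈ Set.Icc 1 n ∧
        i₁ < i₂ ∧ i₂ < i₃ ∧ ∃ d : ℤ, d ≠ 0 ∧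
          (σ i₂ : ℤ) = (σ i₁ : ℤ) + r * d ∧ (σ i₃ : ℤ) = (σ i₂ : ℤ) + s * d :=
  exists_finite_perm_avoiding_rs_3prog_general r s n hrodd hsodd
end

section
/- For all odd positive integers r and s and every real ε > 0, there exist a set S of integers and a bijection f : ℕ → S such that f avoids (r, s) 3-progressions, the lower density of S is at least rs/((r+s)(r+2s)) − ε, and the upper density of S is at least s/(r+s) − ε. -/
/-!
Take the symmetric annuli `N_k + g_k < |w| ≤ N_{k+1}` with `N_0 = 0` (`radius`, `gap`, `width`
below) and list them one after the other, each annulus in 2-adic order, i.e. ordered by the bit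
reversal of `w`. An `(r, s)`-progression `x, y, z` listed in this order cannot lie in one annulus:
if `2 ^ v` exactly divides `d`, the three terms agree below bit `v`, and as `r`, `s` are odd, bit
`v` alternates, which bit-reversal order forbids. It cannot jump from inside radius `N_k` beyond
`N_k + g_k`, since `|z| ≤ |y| + (s / r) |y - x| ≤ (1 + 2s / r) N_k`. Nor can `x` lie inside
radius `N_k` with `y, z` in annulus `k`: then `r |z - y| ≤ r (w_k - 1) ≤ s g_k < s |y - x|`.
With `g_k ≈ 2s N_k / r` and `w_k ≈ s g_k / r`, the annuli fill asymptotically a proportion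
`s / (r + s)` of `[-N_k, N_k]`, and at least `rs / ((r + s)(r + 2s))` of every `[-n, n]`.
-/

open Filter

theorem Set.Infinite.exists_range_eq_strictMono_comp {α : Type*} {S : Set α} (hS : S.Infinite)
    {φ : α → ℕ} (hφ : Set.InjOn φ S) :
    ∃ f : ℕ → α, Set.range f = S ∧ StrictMono (φ ∘ f) := by
  classical
  have : Nonempty α := hS.nonempty.to_subtype.map Subtype.val
  have hT : (φ '' S).Infinite := hS.image hφ
  set g := Nat.nth (· ∈ φ '' S)
  have hφg : ∀ i, φ (Function.invFunOn φ S (g i)) = g i := fun i =>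
    Function.invFunOn_eq (Nat.nth_mem_of_infinite hT i)
  refine ⟨fun i => Function.invFunOn φ S (g i), ?_, fun i j hij => ?_⟩
  · refine Set.Subset.antisymm (Set.range_subset_iff.mpr fun i =>
      Function.invFunOn_mem (Nat.nth_mem_of_infinite hT i)) fun w hw => ?_
    have hgw : g (Nat.count (· ∈ φ '' S) (φ w)) = φ w := Nat.nth_count ⟨w, hw, rfl⟩
    have hmem : ∃ a ∈ S, φ a = g (Nat.count (· ∈ φ '' S) (φ w)) := ⟨w, hw, hgw.symm⟩
    exact ⟨_, hφ (Function.invFunOn_mem hmem) hw ((hφg _).trans hgw)⟩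
  · simp only [Function.comp, hφg]
    exact Nat.nth_strictMono hT hij

theorem Int.exists_eq_two_pow_mul_odd_of_abs_lt {d : ℤ} {l : ℕ} (hd : d ≠ 0)
    (hdl : |d| < 2 ^ l) : ∃ v < l, ∃ e, Odd e ∧ d = 2 ^ v * e := by
  obtain ⟨v, m, hm, habs⟩ := Nat.exists_eq_two_pow_mul_odd (Int.natAbs_ne_zero.mpr hd)
  have hvl : 2 ^ v < 2 ^ l := by
    have : d.natAbs < 2 ^ l := by rw [← Int.natCast_natAbs] at hdl; exact_mod_cast hdl
    rw [habs] at this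
    exact (Nat.le_mul_of_pos_right _ hm.pos).trans_lt this
  refine ⟨v, (Nat.pow_lt_pow_iff_right (by norm_num)).mp hvl, ?_⟩
  have hm' : Odd (m : ℤ) := (Int.odd_coe_nat m).mpr hm
  rcases Int.natAbs_eq d with h | h
  · exact ⟨m, hm', by rw [h, habs]; push_cast; ring⟩
  · exact ⟨-m, hm'.neg, by rw [h, habs]; push_cast; ring⟩

/-- `bitRev l x` reads the `l` lowest binary digits of `x` in reverse order (floor division, so
negative `x` are read 2-adically): bit reversals compare at the lowest bit where the arguments
differ. -/
def bitRev : ℕ → ℤ → ℕ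
  | 0, _ => 0
  | l + 1, x => (x % 2).toNat * 2 ^ l + bitRev l (x / 2)

theorem bitRev_lt_two_pow (l : ℕ) (x : ℤ) : bitRev l x < 2 ^ l := by
  induction l generalizing x with
  | zero => simp [bitRev]
  | succ l ih =>
    have hbit : (x % 2).toNat ≤ 1 := by omega
    have := ih (x / 2)
    rw [bitRev, pow_succ]
    nlinarith

theorem bitRev_lt_bitRev_add {v l : ℕ} (hvl : v < l) {x e : ℤ} (he : Odd e)
    (hx : Even (x / 2 ^ v)) : bitRev l x < bitRev l (x + 2 ^ v * e) := by
  induction v generalizing l x with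
  | zero =>
    obtain ⟨l, rfl⟩ := Nat.exists_eq_add_of_lt hvl
    simp only [pow_zero, Int.ediv_one, one_mul] at hx ⊢
    have := bitRev_lt_two_pow l (x / 2)
    simp only [zero_add, bitRev, Int.even_iff.mp hx, Int.odd_iff.mp (hx.add_odd he),
      Int.toNat_zero, Int.toNat_one, zero_mul, one_mul]
    omega
  | succ v ih =>
    obtain ⟨l, rfl⟩ : ∃ l', l = l' + 1 := ⟨l - 1, by omega⟩
    have htwo : (2 : ℤ) ^ (v + 1) * e = 2 * (2 ^ v * e) := by ring
    have hhalf : x / 2 ^ (v + 1) = x / 2 / 2 ^ v := by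
      rw [pow_succ', Int.ediv_ediv_of_nonneg (by norm_num)]
    rw [bitRev, bitRev, htwo, Int.add_mul_emod_self_left, Int.add_mul_ediv_left _ _ two_ne_zero]
    have := ih (l := l) (x := x / 2) (by omega) (hhalf ▸ hx)
    omega

theorem bitRev_add_lt_bitRev {v l : ℕ} (hvl : v < l) {x e : ℤ} (he : Odd e)
    (hx : Odd (x / 2 ^ v)) : bitRev l (x + 2 ^ v * e) < bitRev l x := by
  have key := bitRev_lt_bitRev_add hvl (x := x + 2 ^ v * e) he.neg
    (by rw [Int.add_mul_ediv_left _ _ (pow_ne_zero _ two_ne_zero)]; exact hx.add_odd he)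
  rwa [mul_neg, add_neg_cancel_right] at key

theorem eq_of_bitRev_eq_of_abs_sub_lt {l : ℕ} {x y : ℤ} (hxy : |y - x| < 2 ^ l)
    (h : bitRev l x = bitRev l y) : x = y := by
  by_contra hne
  obtain ⟨v, hvl, e, he, hd⟩ :=
    Int.exists_eq_two_pow_mul_odd_of_abs_lt (sub_ne_zero.mpr (Ne.symm hne)) hxy
  obtain rfl : y = x + 2 ^ v * e := by rw [← hd]; ring
  rcases Int.even_or_odd (x / 2 ^ v) with hx | hx
  · exact (bitRev_lt_bitRev_add hvl he hx).ne h
  · exact (bitRev_add_lt_bitRev hvl he hx).ne h.symm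

theorem not_bitRev_monotone_progression {l : ℕ} {r s d : ℤ} (hr : Odd r) (hs : Odd s)
    (hd : d ≠ 0) (hdl : |d| < 2 ^ l) (x : ℤ) :
    ¬ (bitRev l x ≤ bitRev l (x + r * d) ∧
      bitRev l (x + r * d) ≤ bitRev l (x + r * d + s * d)) := by
  obtain ⟨v, hvl, e, he, rfl⟩ := Int.exists_eq_two_pow_mul_odd_of_abs_lt hd hdl
  rw [show r * (2 ^ v * e) = 2 ^ v * (r * e) by ring,
    show s * (2 ^ v * e) = 2 ^ v * (s * e) by ring]
  rintro ⟨hxy, hyz⟩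
  rcases Int.even_or_odd (x / 2 ^ v) with hx | hx
  · have hy : Odd ((x + 2 ^ v * (r * e)) / 2 ^ v) := by
      rw [Int.add_mul_ediv_left _ _ (pow_ne_zero _ two_ne_zero)]
      exact hx.add_odd (hr.mul he)
    exact (bitRev_add_lt_bitRev hvl (hs.mul he) hy).not_ge hyz
  · exact (bitRev_add_lt_bitRev hvl (hr.mul he) hx).not_ge hxy

theorem abs_sub_lt_two_pow {N : ℕ} {x y : ℤ} (hx : |x| ≤ N) (hy : |y| ≤ N) :
    |y - x| < 2 ^ (N + 1) := by
  have : (N : ℤ) < 2 ^ N := by exact_mod_cast Nat.lt_two_pow_self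
  rw [pow_succ]
  linarith [abs_sub y x]

noncomputable def countingRatio (S : Set ℤ) (n : ℕ) : ℝ :=
  ((S ∩ Set.Icc (-(n : ℤ)) n).ncard : ℝ) / (2 * n + 1)

theorem countingRatio_le_one (S : Set ℤ) (n : ℕ) : countingRatio S n ≤ 1 := by
  have hle : (S ∩ Set.Icc (-(n : ℤ)) n).ncard ≤ 2 * n + 1 := by
    refine (Set.ncard_le_ncard Set.inter_subset_right (Set.finite_Icc _ _)).trans_eq ?_
    rw [← Finset.coe_Icc, Set.ncard_coe_finset, Int.card_Icc]; omega
  rw [countingRatio, div_le_one (by positivity)]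
  exact_mod_cast hle

theorem isBoundedUnder_countingRatio (S : Set ℤ) :
    IsBoundedUnder (· ≤ ·) atTop (countingRatio S) :=
  isBoundedUnder_of ⟨1, countingRatio_le_one S⟩

theorem mul_div_le_countingRatio {S : Set ℤ} {a : ℝ} {n : ℕ}
    (h : 2 * a * n ≤ (S ∩ Set.Icc (-(n : ℤ)) n).ncard) :
    a * (n / (n + 1 / 2)) ≤ countingRatio S n := by
  rw [show a * (n / (n + 1 / 2)) = 2 * a * n / (2 * n + 1) by field_simp, countingRatio]
  exact div_le_div_of_nonneg_right h (by positivity)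

theorem eventually_sub_lt_mul_div (a : ℝ) {ε : ℝ} (hε : 0 < ε) :
    ∀ᶠ n : ℕ in atTop, a - ε < a * (n / (n + 1 / 2)) := by
  have h := (tendsto_natCast_div_add_atTop (1 / 2 : ℝ)).const_mul a
  rw [mul_one] at h
  exact h.eventually_const_lt (by linarith)

theorem le_liminf_countingRatio {S : Set ℤ} {a ε : ℝ} (hε : 0 < ε)
    (h : ∀ n : ℕ, 2 * a * n ≤ (S ∩ Set.Icc (-(n : ℤ)) n).ncard) :
    a - ε ≤ liminf (countingRatio S) atTop :=
  le_liminf_of_le (isBoundedUnder_countingRatio S).isCoboundedUnder_ge <|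
    (eventually_sub_lt_mul_div a hε).mono fun n hn => hn.le.trans (mul_div_le_countingRatio (h n))

theorem le_limsup_countingRatio {S : Set ℤ} {a ε : ℝ} (hε : 0 < ε) {N : ℕ → ℕ}
    (hN : Tendsto N atTop atTop)
    (h : ∀ k, 2 * a * N k ≤ (S ∩ Set.Icc (-(N k : ℤ)) (N k)).ncard) :
    a - ε ≤ limsup (countingRatio S) atTop := by
  refine le_limsup_of_frequently_le (hN.frequently (Eventually.frequently ?_))
    (isBoundedUnder_countingRatio S)
  exact (hN.eventually (eventually_sub_lt_mul_div a hε)).mono fun k hk =>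
    hk.le.trans (mul_div_le_countingRatio (h k))

theorem two_mul_count_le_ncard {p : ℕ → Prop} [DecidablePred p] (hp : ¬ p 0) (n : ℕ) :
    2 * Nat.count p (n + 1) ≤ ({w : ℤ | p w.natAbs} ∩ Set.Icc (-(n : ℤ)) n).ncard := by
  rw [Nat.count_eq_card_filter_range]
  set F := (Finset.range (n + 1)).filter p
  set P := F.image (Nat.cast : ℕ → ℤ)
  set Q := F.image fun m : ℕ => -(m : ℤ)
  have hP : P.card = F.card := Finset.card_image_of_injective _ Nat.cast_injective
  have hQ : Q.card = F.card := Finset.card_image_of_injective _ fun a b h => by simpa using h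
  have hdisj : Disjoint P Q := by
    simp only [P, Q, Finset.disjoint_left, Finset.mem_image, F, Finset.mem_filter]
    rintro _ ⟨a, ⟨-, ha⟩, rfl⟩ ⟨b, -, hab⟩
    obtain rfl : a = 0 := by omega
    exact hp ha
  have hsub : (↑(P ∪ Q) : Set ℤ) ⊆ {w : ℤ | p w.natAbs} ∩ Set.Icc (-(n : ℤ)) n := by
    simp only [P, Q, Finset.coe_union, Finset.coe_image, F, Finset.coe_filter, Finset.mem_range]
    rintro _ (⟨m, ⟨hm, hpm⟩, rfl⟩ | ⟨m, ⟨hm, hpm⟩, rfl⟩) <;>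
      exact ⟨by simpa using hpm, by simp only [Set.mem_Icc]; omega⟩
  calc 2 * F.card = (P ∪ Q).card := by rw [Finset.card_union_of_disjoint hdisj, hP, hQ]; ring
    _ ≤ _ := by
      rw [← Set.ncard_coe_finset]
      exact Set.ncard_le_ncard hsub ((Set.finite_Icc _ _).subset Set.inter_subset_right)

namespace RSProgression

variable (r s : ℕ)

/-- The gap after radius `N` is just wide enough for `not_progression_of_far`, and the annulus
that follows it just narrow enough for `not_progression_of_mid`. -/
def gap (N : ℕ) : ℕ := 2 * s * N / r

def width (N : ℕ) : ℕ := s * gap r s N / r + 1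

def radius : ℕ → ℕ
  | 0 => 0
  | k + 1 => radius k + gap r s (radius k) + width r s (radius k)

def innerRadius (k : ℕ) : ℕ := radius r s k + gap r s (radius r s k)

def InAnnulus (k m : ℕ) : Prop := innerRadius r s k < m ∧ m ≤ radius r s (k + 1)

def IsAnnulusPoint (m : ℕ) : Prop := ∃ k, InAnnulus r s k m

def annuliSet : Set ℤ := {w | IsAnnulusPoint r s w.natAbs}

variable {r s}

theorem two_mul_lt_gap (hr : 0 < r) (N : ℕ) : 2 * s * N < r * (gap r s N + 1) :=
  Nat.lt_mul_div_succ _ hr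

theorem mul_gap_le_mul_width (hr : 0 < r) (N : ℕ) : s * gap r s N ≤ r * width r s N :=
  (Nat.lt_mul_div_succ _ hr).le

theorem mul_width_le (N : ℕ) : r * width r s N ≤ s * gap r s N + r := by
  rw [width, Nat.mul_succ]; exact Nat.add_le_add_right (Nat.mul_div_le _ _) r

theorem radius_succ (k : ℕ) :
    radius r s (k + 1) = innerRadius r s k + width r s (radius r s k) := rfl

theorem radius_le_innerRadius (k : ℕ) : radius r s k ≤ innerRadius r s k := Nat.le_add_right _ _

theorem innerRadius_lt_radius_succ (k : ℕ) : innerRadius r s k < radius r s (k + 1) := by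
  rw [radius_succ, width]; exact Nat.lt_add_of_pos_right (Nat.succ_pos _)

theorem radius_strictMono : StrictMono (radius r s) :=
  strictMono_nat_of_lt_succ fun k =>
    (radius_le_innerRadius k).trans_lt (innerRadius_lt_radius_succ k)

theorem le_radius (k : ℕ) : k ≤ radius r s k := radius_strictMono.id_le k

theorem exists_le_radius_succ (m : ℕ) : ∃ k, m ≤ radius r s (k + 1) :=
  ⟨m, (le_radius (m + 1)).trans' m.le_succ⟩

variable (r s) in
def annulusIndex (m : ℕ) : ℕ := Nat.find (exists_le_radius_succ (r := r) (s := s) m)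

theorem le_radius_annulusIndex_succ (m : ℕ) : m ≤ radius r s (annulusIndex r s m + 1) :=
  Nat.find_spec (exists_le_radius_succ m)

theorem radius_annulusIndex_lt {m : ℕ} (hm : 0 < m) : radius r s (annulusIndex r s m) < m := by
  rcases h : annulusIndex r s m with _ | k
  · exact hm
  · exact not_le.mp (Nat.find_min (exists_le_radius_succ m) (by omega : k < annulusIndex r s m))

theorem InAnnulus.annulusIndex_eq {k m : ℕ} (h : InAnnulus r s k m) :
    annulusIndex r s m = k := by
  refine (Nat.find_eq_iff _).mpr ⟨h.2, fun j hj hle => ?_⟩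
  have := (radius_strictMono (r := r) (s := s)).monotone (show j + 1 ≤ k by omega)
  have := radius_le_innerRadius (r := r) (s := s) k
  have := h.1
  omega

theorem IsAnnulusPoint.inAnnulus {m : ℕ} (h : IsAnnulusPoint r s m) :
    InAnnulus r s (annulusIndex r s m) m := by
  obtain ⟨k, hk⟩ := h
  rwa [hk.annulusIndex_eq]

theorem not_isAnnulusPoint_zero : ¬ IsAnnulusPoint r s 0 :=
  fun ⟨_, h, _⟩ => Nat.not_lt_zero _ h

theorem annuliSet_infinite : (annuliSet r s).Infinite := by
  refine Set.infinite_of_not_bddAbove fun ⟨b, hb⟩ => ?_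
  have hmem : (radius r s (b.toNat + 1) : ℤ) ∈ annuliSet r s :=
    ⟨b.toNat, innerRadius_lt_radius_succ _, by rw [Int.natAbs_natCast]⟩
  have := le_radius (r := r) (s := s) (b.toNat + 1)
  have := hb hmem
  omega

theorem abs_bounds_of_mem_annuliSet {w : ℤ} (hw : w ∈ annuliSet r s) :
    (innerRadius r s (annulusIndex r s w.natAbs) : ℤ) < |w| ∧
      |w| ≤ radius r s (annulusIndex r s w.natAbs + 1) := by
  obtain ⟨h₁, h₂⟩ := IsAnnulusPoint.inAnnulus hw
  rw [← Int.natCast_natAbs]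
  exact ⟨by exact_mod_cast h₁, by exact_mod_cast h₂⟩

theorem abs_le_radius_of_mem_annuliSet {w : ℤ} (hw : w ∈ annuliSet r s) {k : ℕ}
    (hk : annulusIndex r s w.natAbs < k) : |w| ≤ radius r s k :=
  (abs_bounds_of_mem_annuliSet hw).2.trans (by exact_mod_cast radius_strictMono.monotone hk)

theorem not_progression_of_far (hr : 0 < r) {N : ℕ} {x y z d : ℤ} (hx : |x| ≤ N)
    (hy : |y| ≤ N) (hz : (N + gap r s N : ℤ) < |z|) (hxy : y = x + r * d) :
    z ≠ y + s * d := by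
  rintro rfl
  have hgap : (2 * s * N : ℤ) < r * (gap r s N + 1) := by exact_mod_cast two_mul_lt_gap hr N
  have hstep : (r : ℤ) * |d| ≤ 2 * N := by
    rw [← Nat.abs_cast r, ← abs_mul, show (r : ℤ) * d = y - x by rw [hxy]; ring]
    linarith [abs_sub y x]
  have hz' : |y + s * d| ≤ |y| + s * |d| := by simpa [abs_mul] using abs_add_le y (s * d)
  have hr' : (0 : ℤ) < r := by exact_mod_cast hr
  nlinarith

theorem not_progression_of_mid (hs : 0 < s) {N : ℕ} {x y z d : ℤ} (hd : d ≠ 0)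
    (hx : |x| ≤ N) (hy₁ : (N + gap r s N : ℤ) < |y|)
    (hy₂ : |y| ≤ (N + gap r s N + width r s N : ℤ))
    (hz₁ : (N + gap r s N : ℤ) < |z|) (hz₂ : |z| ≤ (N + gap r s N + width r s N : ℤ))
    (hxy : y = x + r * d) : z ≠ y + s * d := by
  wlog hd₀ : 0 < d generalizing x y z d
  · have := this (x := -x) (y := -y) (z := -z) (d := -d) (neg_ne_zero.mpr hd)
      (by rwa [abs_neg]) (by rwa [abs_neg]) (by rwa [abs_neg]) (by rwa [abs_neg])
      (by rwa [abs_neg]) (by rw [hxy]; ring) (by omega)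
    exact fun h => this (by rw [h]; ring)
  rintro rfl
  have hW : (r * width r s N : ℤ) ≤ s * gap r s N + r := by exact_mod_cast mul_width_le N
  -- `x ≤ y ≤ z` and `|x| < |y|`, so `y` and `z` are both positive.
  have hy : 0 < y := by
    by_contra! hy
    rw [abs_of_nonpos hy] at hy₁
    have : 0 ≤ (r : ℤ) * d := mul_nonneg (Nat.cast_nonneg r) hd₀.le
    linarith [neg_abs_le x]
  have : 0 < (s : ℤ) * d := mul_pos (by exact_mod_cast hs) hd₀
  rw [abs_of_pos hy] at hy₁
  rw [abs_of_pos (by linarith)] at hz₂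
  have hx' := le_abs_self x
  nlinarith

variable (r s) in
def keyLength (m : ℕ) : ℕ := radius r s (annulusIndex r s m + 1) + 1

variable (r s) in
/-- Orders points by annulus, then by bit reversal: `2 ^ l + bitRev l w` lies in
`[2 ^ l, 2 ^ (l + 1))`, and `l` grows with the annulus. -/
def key (w : ℤ) : ℕ := 2 ^ keyLength r s w.natAbs + bitRev (keyLength r s w.natAbs) w

theorem log_two_key (w : ℤ) : Nat.log 2 (key r s w) = keyLength r s w.natAbs := by
  have := bitRev_lt_two_pow (keyLength r s w.natAbs) w
  exact Nat.log_eq_of_pow_le_of_lt_pow (Nat.le_add_right _ _) (by rw [key, pow_succ]; omega)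

theorem keyLength_le_keyLength {m n : ℕ} :
    keyLength r s m ≤ keyLength r s n ↔ annulusIndex r s m ≤ annulusIndex r s n := by
  simp only [keyLength, add_le_add_iff_right, radius_strictMono.le_iff_le]

theorem key_lt_key {x y : ℤ} (h : key r s x < key r s y) :
    annulusIndex r s x.natAbs < annulusIndex r s y.natAbs ∨
      annulusIndex r s x.natAbs = annulusIndex r s y.natAbs ∧
        bitRev (keyLength r s x.natAbs) x < bitRev (keyLength r s x.natAbs) y := by
  have hle := keyLength_le_keyLength.mp
    ((log_two_key x).symm.trans_le ((Nat.log_monotone h.le).trans_eq (log_two_key y)))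
  rcases hle.lt_or_eq with hlt | heq
  · exact Or.inl hlt
  · refine Or.inr ⟨heq, ?_⟩
    have : keyLength r s x.natAbs = keyLength r s y.natAbs := by rw [keyLength, keyLength, heq]
    rw [key, key, ← this] at h
    omega

theorem annulusIndex_le_of_key_lt {x y : ℤ} (h : key r s x < key r s y) :
    annulusIndex r s x.natAbs ≤ annulusIndex r s y.natAbs :=
  (key_lt_key h).elim le_of_lt fun h => h.1.le

theorem key_injOn : Set.InjOn (key r s) (annuliSet r s) := by
  intro x hx y hy h
  have hidx : annulusIndex r s x.natAbs = annulusIndex r s y.natAbs :=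
    le_antisymm (keyLength_le_keyLength.mp (by rw [← log_two_key, ← log_two_key, h]))
      (keyLength_le_keyLength.mp (by rw [← log_two_key, ← log_two_key, h]))
  have hlen : keyLength r s x.natAbs = keyLength r s y.natAbs := by
    rw [keyLength, keyLength, hidx]
  rw [key, key, ← hlen] at h
  refine eq_of_bitRev_eq_of_abs_sub_lt (l := keyLength r s x.natAbs) ?_ (by omega)
  exact abs_sub_lt_two_pow (abs_bounds_of_mem_annuliSet hx).2
    (hidx ▸ (abs_bounds_of_mem_annuliSet hy).2)

theorem not_progression_of_key_lt (hr : Odd r) (hs : Odd s) {x y z d : ℤ}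
    (hx : x ∈ annuliSet r s) (hy : y ∈ annuliSet r s) (hz : z ∈ annuliSet r s)
    (hxy : key r s x < key r s y) (hyz : key r s y < key r s z) (hd : d ≠ 0)
    (h : y = x + r * d) : z ≠ y + s * d := by
  obtain ⟨hy₁, hy₂⟩ := abs_bounds_of_mem_annuliSet hy
  obtain ⟨hz₁, hz₂⟩ := abs_bounds_of_mem_annuliSet hz
  rcases key_lt_key hyz with hbc | ⟨hbc, hbit₂⟩
  · exact not_progression_of_far hr.pos
      (abs_le_radius_of_mem_annuliSet hx ((annulusIndex_le_of_key_lt hxy).trans_lt hbc))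
      (abs_le_radius_of_mem_annuliSet hy hbc) (by exact_mod_cast hz₁) h
  rcases key_lt_key hxy with hab | ⟨hab, hbit₁⟩
  · rw [← hbc] at hz₁ hz₂
    rw [radius_succ] at hy₂ hz₂
    exact not_progression_of_mid hs.pos hd (abs_le_radius_of_mem_annuliSet hx hab)
      (by exact_mod_cast hy₁) (by exact_mod_cast hy₂) (by exact_mod_cast hz₁)
      (by exact_mod_cast hz₂) h
  · have hlen : keyLength r s x.natAbs = keyLength r s y.natAbs := by
      rw [keyLength, keyLength, hab]
    rintro rfl
    subst h
    refine not_bitRev_monotone_progression ((Int.odd_coe_nat r).mpr hr)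
      ((Int.odd_coe_nat s).mpr hs) hd ?_ x ⟨hbit₁.le, hlen ▸ hbit₂.le⟩
    calc |d| ≤ |(r : ℤ) * d| := by
          rw [abs_mul, Nat.abs_cast]
          exact le_mul_of_one_le_left (abs_nonneg d) (by exact_mod_cast hr.pos)
      _ = |x + r * d - x| := by ring_nf
      _ < _ := abs_sub_lt_two_pow (abs_bounds_of_mem_annuliSet hx).2 (hab ▸ hy₂)

section Counting

open scoped Classical

theorem count_radius_add_width_le (k : ℕ) :
    Nat.count (IsAnnulusPoint r s) (radius r s k + 1) + width r s (radius r s k) ≤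
      Nat.count (IsAnnulusPoint r s) (radius r s (k + 1) + 1) := by
  have hsplit : radius r s (k + 1) + 1 = innerRadius r s k + 1 + width r s (radius r s k) := by
    rw [radius_succ]; ring
  have hannulus : Nat.count (fun i => IsAnnulusPoint r s (innerRadius r s k + 1 + i))
      (width r s (radius r s k)) = width r s (radius r s k) :=
    Nat.count_of_forall fun i hi => ⟨k, by omega, by rw [radius_succ]; omega⟩
  rw [hsplit, Nat.count_add (a := innerRadius r s k + 1), hannulus]
  exact Nat.add_le_add_right
    (Nat.count_monotone _ (Nat.succ_le_succ (radius_le_innerRadius k))) _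

theorem mul_radius_le_count (hr : 0 < r) (k : ℕ) :
    s * radius r s k ≤ (r + s) * Nat.count (IsAnnulusPoint r s) (radius r s k + 1) := by
  induction k with
  | zero => simp [radius]
  | succ k ih =>
    have hstep := count_radius_add_width_le (r := r) (s := s) k
    have hgap := mul_gap_le_mul_width (s := s) hr (radius r s k)
    calc s * radius r s (k + 1)
        = s * radius r s k + s * gap r s (radius r s k) + s * width r s (radius r s k) := by
          rw [radius]; ring
      _ ≤ (r + s) * (Nat.count (IsAnnulusPoint r s) (radius r s k + 1) +
            width r s (radius r s k)) := by nlinarith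
      _ ≤ _ := Nat.mul_le_mul_left _ hstep

theorem mul_le_count (hr : 0 < r) (n : ℕ) :
    r * s * n ≤ (r + s) * (r + 2 * s) * Nat.count (IsAnnulusPoint r s) (n + 1) := by
  induction n with
  | zero => simp
  | succ n ih =>
    by_cases hp : IsAnnulusPoint r s (n + 1)
    · rw [Nat.count_succ, if_pos hp]
      nlinarith
    set k := annulusIndex r s (n + 1)
    have hinner : n + 1 ≤ innerRadius r s k :=
      not_lt.mp fun h => hp ⟨k, h, le_radius_annulusIndex_succ _⟩
    have hk : radius r s k < n + 1 := radius_annulusIndex_lt n.succ_pos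
    have hgap : r * gap r s (radius r s k) ≤ 2 * s * radius r s k := Nat.mul_div_le _ _
    calc r * s * (n + 1) ≤ r * s * innerRadius r s k := Nat.mul_le_mul_left _ hinner
      _ = s * (r * radius r s k + r * gap r s (radius r s k)) := by rw [innerRadius]; ring
      _ ≤ (r + 2 * s) * (s * radius r s k) := by nlinarith
      _ ≤ (r + 2 * s) * ((r + s) * Nat.count (IsAnnulusPoint r s) (radius r s k + 1)) :=
        Nat.mul_le_mul_left _ (mul_radius_le_count hr k)
      _ ≤ (r + 2 * s) * ((r + s) * Nat.count (IsAnnulusPoint r s) (n + 1 + 1)) :=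
        Nat.mul_le_mul_left _ (Nat.mul_le_mul_left _ (Nat.count_monotone _ (by omega)))
      _ = _ := by ring

theorem le_ncard_annuliSet_inter_Icc (hr : 0 < r) (n : ℕ) :
    2 * ((r : ℝ) * s / ((r + s) * (r + 2 * s))) * n ≤
      (annuliSet r s ∩ Set.Icc (-(n : ℤ)) n).ncard := by
  have hcount : (r * s * n : ℝ) ≤
      (r + s) * (r + 2 * s) * Nat.count (IsAnnulusPoint r s) (n + 1) := by
    exact_mod_cast mul_le_count hr n
  have hncard : (2 * Nat.count (IsAnnulusPoint r s) (n + 1) : ℝ) ≤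
      (annuliSet r s ∩ Set.Icc (-(n : ℤ)) n).ncard := by
    exact_mod_cast two_mul_count_le_ncard not_isAnnulusPoint_zero n
  have hpos : (0 : ℝ) < (r + s) * (r + 2 * s) := by positivity
  calc 2 * ((r : ℝ) * s / ((r + s) * (r + 2 * s))) * n
        = 2 * (r * s * n / ((r + s) * (r + 2 * s))) := by ring
    _ ≤ 2 * Nat.count (IsAnnulusPoint r s) (n + 1) := by
        gcongr; rw [div_le_iff₀ hpos]; linarith
    _ ≤ _ := hncard

theorem le_ncard_annuliSet_inter_Icc_radius (hr : 0 < r) (k : ℕ) :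
    2 * ((s : ℝ) / (r + s)) * radius r s k ≤
      (annuliSet r s ∩ Set.Icc (-(radius r s k : ℤ)) (radius r s k)).ncard := by
  have hcount : (s * radius r s k : ℝ) ≤
      (r + s) * Nat.count (IsAnnulusPoint r s) (radius r s k + 1) := by
    exact_mod_cast mul_radius_le_count hr k
  have hncard : (2 * Nat.count (IsAnnulusPoint r s) (radius r s k + 1) : ℝ) ≤
      (annuliSet r s ∩ Set.Icc (-(radius r s k : ℤ)) (radius r s k)).ncard := by
    exact_mod_cast two_mul_count_le_ncard not_isAnnulusPoint_zero (radius r s k)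
  have hpos : (0 : ℝ) < r + s := by positivity
  calc 2 * ((s : ℝ) / (r + s)) * radius r s k = 2 * (s * radius r s k / (r + s)) := by ring
    _ ≤ 2 * Nat.count (IsAnnulusPoint r s) (radius r s k + 1) := by
        gcongr; rw [div_le_iff₀ hpos]; linarith
    _ ≤ _ := hncard

end Counting

end RSProgression

open RSProgression in
theorem density_int_avoid_rs_3prog_general (r s : ℕ)
    (hrodd : Odd r) (hsodd : Odd s) (ε : ℝ) (hε : 0 < ε) :
    ∃ (S : Set ℤ) (f : ℕ → ℤ),
      Function.Injective f ∧ Set.range f = S ∧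
      (¬ ∃ (i₁ i₂ i₃ : ℕ) (d : ℤ), i₁ < i₂ ∧ i₂ < i₃ ∧ d ≠ 0 ∧
        f i₂ = f i₁ + r * d ∧ f i₃ = f i₂ + s * d) ∧
      (r : ℝ) * s / (((r : ℝ) + s) * ((r : ℝ) + 2 * s)) - ε ≤
        liminf (fun n : ℕ =>
          ((S ∩ Set.Icc (-(n : ℤ)) (n : ℤ)).ncard : ℝ) / (2 * n + 1)) atTop ∧
      (s : ℝ) / ((r : ℝ) + s) - ε ≤
        limsup (fun n : ℕ =>
          ((S ∩ Set.Icc (-(n : ℤ)) (n : ℤ)).ncard : ℝ) / (2 * n + 1)) atTop := by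
  obtain ⟨f, hrange, hmono⟩ := annuliSet_infinite.exists_range_eq_strictMono_comp key_injOn
  have hmem : ∀ i, f i ∈ annuliSet r s := fun i => hrange ▸ Set.mem_range_self i
  refine ⟨annuliSet r s, f, hmono.injective.of_comp, hrange, ?_,
    le_liminf_countingRatio hε (le_ncard_annuliSet_inter_Icc hrodd.pos),
    le_limsup_countingRatio hε radius_strictMono.tendsto_atTop
      (le_ncard_annuliSet_inter_Icc_radius hrodd.pos)⟩
  rintro ⟨i₁, i₂, i₃, d, h₁₂, h₂₃, hd, h₁, h₂⟩
  exact not_progression_of_key_lt hrodd hsodd (hmem i₁) (hmem i₂) (hmem i₃) (hmono h₁₂)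
    (hmono h₂₃) hd h₁ h₂

/-- For all odd positive integers `r` and `s` and `ε > 0`, there exist a set `S` of
integers and a bijection `f : ℕ → S` avoiding `(r, s)` 3-progressions, with lower
density of `S` at least `rs/((r+s)(r+2s)) − ε` and upper density at least
`s/(r+s) − ε`. -/
theorem density_int_avoid_rs_3prog (r s : ℕ)
    (hrodd : Odd r) (hr : 0 < r) (hsodd : Odd s) (hs : 0 < s) (ε : ℝ) (hε : 0 < ε) :
    ∃ (S : Set ℤ) (f : ℕ → ℤ),
      Function.Injective f ∧ Set.range f = S ∧
      (¬ ∃ (i₁ i₂ i₃ : ℕ) (d : ℤ), i₁ < i₂ ∧ i₂ < i₃ ∧ d ≠ 0 ∧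
        f i₂ = f i₁ + r * d ∧ f i₃ = f i₂ + s * d) ∧
      (r : ℝ) * s / (((r : ℝ) + s) * ((r : ℝ) + 2 * s)) - ε ≤
        liminf (fun n : ℕ =>
          ((S ∩ Set.Icc (-(n : ℤ)) (n : ℤ)).ncard : ℝ) / (2 * n + 1)) atTop ∧
      (s : ℝ) / ((r : ℝ) + s) - ε ≤
        limsup (fun n : ℕ =>
          ((S ∩ Set.Icc (-(n : ℤ)) (n : ℤ)).ncard : ℝ) / (2 * n + 1)) atTop :=
  density_int_avoid_rs_3prog_general r s hrodd hsodd ε hε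
end
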